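/- arXiv:2012.11965 — 11 statements merged into one kernel-verified Lean document; each statement's English description precedes it below -/
import Mathlib

section
/- In a hypergraph, if a set of subtrees of a join tree pairwise share a node, then there is a node shared by all of them (Helly property for subtrees of a tree). -/
/-!
Subtrees of a tree are convex: by uniqueness of paths, the path between two vertices of a subtree
stays inside it. Hence two intersecting subtrees meet in a subtree, and three pairwise intersecting
subtrees `s, t, r` have a common vertex: otherwise the path from `a ∈ s ∩ t` to `c ∈ s ∩ r` lies in
`s` and in `t ∪ r`, so it has an edge `xy` from `t \ r` to `r \ t`, and the paths from some
`b ∈ t ∩ r` to `x` (inside `t`) and to `y` (inside `r`) would close a cycle. The general case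
follows by induction, replacing the family `fᵢ` by `f₀ ∩ fᵢ`.
-/

namespace SimpleGraph

variable {V : Type*} {G : SimpleGraph V} {s t r : Set V} {u v : V}

lemma exists_isPath_support_subset_of_induce_preconnected (hs : (G.induce s).Preconnected)
    (hu : u ∈ s) (hv : v ∈ s) : ∃ p : G.Walk u v, p.IsPath ∧ ∀ x ∈ p.support, x ∈ s := by
  classical
  obtain ⟨p⟩ := hs ⟨u, hu⟩ ⟨v, hv⟩
  refine ⟨p.toPath.1.map (Embedding.induce s).toHom,
    p.toPath.2.map (Embedding.induce (G := G) s).injective, fun x hx ↦ ?_⟩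
  obtain ⟨y, -, rfl⟩ := List.mem_map.mp (Walk.support_map _ _ ▸ hx)
  exact y.2

lemma IsAcyclic.support_subset_of_induce_preconnected (hG : G.IsAcyclic)
    (hs : (G.induce s).Preconnected) {p : G.Walk u v} (hp : p.IsPath) (hu : u ∈ s) (hv : v ∈ s) :
    ∀ x ∈ p.support, x ∈ s := by
  obtain ⟨q, hq, hqs⟩ := exists_isPath_support_subset_of_induce_preconnected hs hu hv
  obtain rfl : p = q := congrArg Subtype.val <| (hG.subsingleton_path u v).elim ⟨p, hp⟩ ⟨q, hq⟩
  exact hqs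

lemma IsAcyclic.induce_inter_preconnected (hG : G.IsAcyclic) (hs : (G.induce s).Preconnected)
    (ht : (G.induce t).Preconnected) : (G.induce (s ∩ t)).Preconnected := by
  rintro ⟨u, hus, hut⟩ ⟨v, hvs, hvt⟩
  obtain ⟨p, hp, hps⟩ := exists_isPath_support_subset_of_induce_preconnected hs hus hvs
  exact ⟨p.induce (s ∩ t) fun x hx ↦
    ⟨hps x hx, hG.support_subset_of_induce_preconnected ht hp hut hvt x hx⟩⟩

lemma IsAcyclic.mem_or_mem_of_adj (hG : G.IsAcyclic) (ht : (G.induce t).Preconnected)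
    (hr : (G.induce r).Preconnected) {b x y : V} (hbt : b ∈ t) (hbr : b ∈ r) (hxt : x ∈ t)
    (hyr : y ∈ r) (hxy : G.Adj x y) : x ∈ r ∨ y ∈ t := by
  obtain ⟨p, hp, hpt⟩ := exists_isPath_support_subset_of_induce_preconnected ht hbt hxt
  obtain ⟨q, hq, hqr⟩ := exists_isPath_support_subset_of_induce_preconnected hr hbr hyr
  by_contra! hxr
  exact hxr.2 <| hpt y <| hG.mem_support_of_ne_mem_support_of_adj_of_isPath hp hq hxy
    fun hx ↦ hxr.1 (hqr x hx)

lemma IsAcyclic.inter_inter_nonempty (hG : G.IsAcyclic) (hs : (G.induce s).Preconnected)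
    (ht : (G.induce t).Preconnected) (hr : (G.induce r).Preconnected)
    (hst : (s ∩ t).Nonempty) (htr : (t ∩ r).Nonempty) (hsr : (s ∩ r).Nonempty) :
    (s ∩ t ∩ r).Nonempty := by
  classical
  obtain ⟨a, has, hat⟩ := hst
  obtain ⟨b, hbt, hbr⟩ := htr
  obtain ⟨c, hcs, hcr⟩ := hsr
  by_contra hstr
  have hmem : ∀ {x}, x ∈ s → x ∈ t → x ∉ r := fun hxs hxt hxr ↦ hstr ⟨_, ⟨hxs, hxt⟩, hxr⟩
  obtain ⟨p, -, hpt⟩ := exists_isPath_support_subset_of_induce_preconnected ht hat hbt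
  obtain ⟨q, -, hqr⟩ := exists_isPath_support_subset_of_induce_preconnected hr hbr hcr
  set P := (p.append q).toPath
  have hPs := hG.support_subset_of_induce_preconnected hs P.2 has hcs
  have hPtr : ∀ x ∈ P.1.support, x ∈ t ∨ x ∈ r := by
    intro x hx
    have := (p.append q).support_toPath_subset_support hx
    rw [Walk.mem_support_append_iff] at this
    exact this.imp (hpt x) (hqr x)
  obtain ⟨d, hd, hxt, hyt⟩ := P.1.exists_boundary_dart t hat fun hct ↦ hmem hcs hct hcr
  have hx := P.1.dart_fst_mem_support_of_mem_darts hd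
  have hyr := (hPtr _ (P.1.dart_snd_mem_support_of_mem_darts hd)).resolve_left hyt
  exact (hG.mem_or_mem_of_adj ht hr hbt hbr hxt hyr d.adj).elim (hmem (hPs _ hx) hxt) hyt

theorem IsAcyclic.biInter_nonempty {ι : Type*} (hG : G.IsAcyclic) {I : Finset ι}
    (hI : I.Nonempty) (f : ι → Set V) (hf : ∀ i ∈ I, (G.induce (f i)).Preconnected)
    (hpair : ∀ i ∈ I, ∀ j ∈ I, (f i ∩ f j).Nonempty) : (⋂ i ∈ I, f i).Nonempty := by
  induction hI using Finset.Nonempty.cons_induction generalizing f with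
  | singleton i => simpa using hpair i (by simp) i (by simp)
  | cons i I hi hI ih =>
    have hiI : i ∈ I.cons i hi := Finset.mem_cons_self i I
    have hI' : ∀ {j}, j ∈ I → j ∈ I.cons i hi := Finset.mem_cons_of_mem
    have hpair' : ∀ j ∈ I, ∀ k ∈ I, (f i ∩ f j ∩ (f i ∩ f k)).Nonempty := fun j hj k hk ↦ by
      rw [← Set.inter_inter_distrib_left, ← Set.inter_assoc]
      exact hG.inter_inter_nonempty (hf i hiI) (hf j (hI' hj)) (hf k (hI' hk))
        (hpair i hiI j (hI' hj)) (hpair j (hI' hj) k (hI' hk)) (hpair i hiI k (hI' hk))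
    obtain ⟨v, hv⟩ := ih (fun j ↦ f i ∩ f j)
      (fun j hj ↦ hG.induce_inter_preconnected (hf i hiI) (hf j (hI' hj))) hpair'
    rw [Set.mem_iInter₂] at hv
    obtain ⟨j, hj⟩ := hI
    refine ⟨v, Set.mem_iInter₂.mpr fun k hk ↦ ?_⟩
    rcases Finset.mem_cons.mp hk with rfl | hk
    exacts [(hv j hj).1, (hv k hk).2]

end SimpleGraph

theorem helly_subtrees_general {V : Type*} (G : SimpleGraph V) (hG : G.IsTree)
    (F : Finset (Set V))
    (hsub : ∀ s ∈ F, (G.induce s).Connected)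
    (hpair : ∀ s ∈ F, ∀ t ∈ F, (s ∩ t).Nonempty) :
    ∃ v : V, ∀ s ∈ F, v ∈ s := by
  rcases F.eq_empty_or_nonempty with rfl | hF
  · obtain ⟨v⟩ := hG.connected.nonempty
    exact ⟨v, by simp⟩
  · obtain ⟨v, hv⟩ := hG.isAcyclic.biInter_nonempty hF id (fun s hs ↦ (hsub s hs).preconnected)
      hpair
    exact ⟨v, Set.mem_iInter₂.mp hv⟩

/-- **Helly property for subtrees of a tree.**
A tree is a finite connected acyclic simple graph.  A subtree is a connected
(induced) subgraph, identified with its vertex set.  If every two subtrees in a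
finite family share a vertex, then all subtrees in the family share a vertex. -/
theorem helly_subtrees {V : Type*} [Fintype V] (G : SimpleGraph V) (hG : G.IsTree)
    (F : Finset (Set V))
    (hsub : ∀ s ∈ F, (G.induce s).Connected)
    (hpair : ∀ s ∈ F, ∀ t ∈ F, (s ∩ t).Nonempty) :
    ∃ v : V, ∀ s ∈ F, v ∈ s :=
  helly_subtrees_general G hG F hsub hpair
end

section
/- Let Q be an acyclic conjunctive query. There exists an atom of Q whose variable set contains all free variables of Q if and only if the maximum number of pairwise independent free variables of Q is at most 1. -/
/-!
In a join tree, the nodes whose atoms contain a variable `v` form a subtree. Two variables are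
neighbours exactly when their subtrees meet, so `α_free ≤ 1` says that the subtrees of the free
variables intersect pairwise (each is nonempty because every free variable occurs in an atom).
By the Helly property of subtrees of a tree they then share a node, i.e. an atom containing all
free variables. Conversely, two variables of a common atom are never independent.

Helly for three subtrees comes from the median: given paths from `a` to `b` and from `a` to `c`,
some path from `b` to `c` passes through a vertex common to both.
-/

/-- Two vertices are neighbors in a hypergraph if some hyperedge contains both. -/
def Nbr {V : Type*} (E : Finset (Finset V)) (x y : V) : Prop :=
  ∃ e ∈ E, x ∈ e ∧ y ∈ e

/-- `T` with labels `lab` is a join tree of the hypergraph with hyperedge set `E`: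
it is a tree whose nodes are (exactly) the hyperedges, satisfying the running
intersection property (for every vertex, the nodes containing it form a connected
subtree). -/
def IsJoinTreeOf {V ι : Type*} (T : SimpleGraph ι) (lab : ι → Finset V)
    (E : Finset (Finset V)) : Prop :=
  T.IsTree ∧ (∀ i, lab i ∈ E) ∧ (∀ e ∈ E, ∃ i, lab i = e) ∧
    ∀ v : V, (T.induce {i | v ∈ lab i}).Preconnected

/-- A hypergraph is acyclic if it admits a join tree. -/
def HGAcyclic {V : Type*} (E : Finset (Finset V)) : Prop :=
  ∃ (ι : Type) (T : SimpleGraph ι) (lab : ι → Finset V), IsJoinTreeOf T lab E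

namespace SimpleGraph

variable {V : Type*} {G : SimpleGraph V}

def IsPathConvex (G : SimpleGraph V) (s : Set V) : Prop :=
  ∀ ⦃a b : V⦄ (p : G.Walk a b), p.IsPath → a ∈ s → b ∈ s → ∀ x ∈ p.support, x ∈ s

theorem IsPathConvex.inter {s t : Set V} (hs : G.IsPathConvex s) (ht : G.IsPathConvex t) :
    G.IsPathConvex (s ∩ t) :=
  fun _ _ p hp ha hb x hx => ⟨hs p hp ha.1 hb.1 x hx, ht p hp ha.2 hb.2 x hx⟩

theorem IsAcyclic.isPathConvex_of_preconnected_induce (hG : G.IsAcyclic) {s : Set V}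
    (hs : (G.induce s).Preconnected) : G.IsPathConvex s := by
  classical
  intro a b p hp ha hb x hx
  obtain ⟨w⟩ := hs ⟨a, ha⟩ ⟨b, hb⟩
  have hw : ∀ y ∈ (w.map (Embedding.induce s).toHom).support, y ∈ s := by
    intro y hy
    rw [Walk.support_map, List.mem_map] at hy
    obtain ⟨z, -, rfl⟩ := hy
    exact z.2
  set w' : G.Walk a b := w.map (Embedding.induce s).toHom
  have hp_eq : p = w'.bypass :=
    congrArg Subtype.val ((hG.subsingleton_path a b).elim ⟨p, hp⟩ ⟨w'.bypass, w'.bypass_isPath⟩)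
  exact hw x (w'.support_bypass_subset_support (hp_eq ▸ hx))

theorem IsAcyclic.exists_mem_support_of_isPath (hG : G.IsAcyclic) {a b c : V}
    {p : G.Walk a b} {q : G.Walk a c} (hp : p.IsPath) (hq : q.IsPath) :
    ∃ r : G.Walk b c, r.IsPath ∧ ∃ x ∈ r.support, x ∈ p.support ∧ x ∈ q.support := by
  classical
  let r := (p.reverse.append q).bypass
  have hr : ∀ x ∈ r.support, x ∈ p.support ∨ x ∈ q.support := by
    intro x hx
    simpa [Walk.mem_support_append_iff] using
      (p.reverse.append q).support_bypass_subset_support hx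
  refine ⟨r, Walk.bypass_isPath _, ?_⟩
  by_cases hc : c ∈ p.support
  · exact ⟨c, r.end_mem_support, hc, q.end_mem_support⟩
  -- the first edge of `r` leaving `p` starts at a vertex of `q`, or `p` and `q` would close a cycle
  obtain ⟨d, hd, hx, hy⟩ := r.exists_boundary_dart {x | x ∈ p.support} p.end_mem_support hc
  have hyq : d.snd ∈ q.support := (hr _ (r.dart_snd_mem_support_of_mem_darts hd)).resolve_left hy
  have hxq : d.fst ∈ (q.takeUntil d.snd hyq).support :=
    hG.mem_support_of_ne_mem_support_of_adj_of_isPath (hq.takeUntil hyq) (hp.takeUntil hx)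
      d.adj.symm fun h => hy (p.support_takeUntil_subset_support hx h)
  exact ⟨d.fst, r.dart_fst_mem_support_of_mem_darts hd, hx,
    q.support_takeUntil_subset_support hyq hxq⟩

theorem IsAcyclic.inter_inter_nonempty_of_isPathConvex (hG : G.IsAcyclic) (hconn : G.Preconnected)
    {s t u : Set V} (hs : G.IsPathConvex s) (ht : G.IsPathConvex t) (hu : G.IsPathConvex u)
    (hst : (s ∩ t).Nonempty) (hsu : (s ∩ u).Nonempty) (htu : (t ∩ u).Nonempty) :
    (s ∩ t ∩ u).Nonempty := by
  classical
  obtain ⟨a, has, hat⟩ := hst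
  obtain ⟨b, hbs, hbu⟩ := hsu
  obtain ⟨c, hct, hcu⟩ := htu
  obtain ⟨p, hp⟩ := (hconn a b).some.toPath
  obtain ⟨q, hq⟩ := (hconn a c).some.toPath
  obtain ⟨r, hr, x, hxr, hxp, hxq⟩ := hG.exists_mem_support_of_isPath hp hq
  exact ⟨x, ⟨hs p hp has hbs x hxp, ht q hq hat hct x hxq⟩, hu r hr hbu hcu x hxr⟩

/-- The Helly property of subtrees of a tree. -/
theorem IsTree.exists_forall_mem_of_isPathConvex {α : Type*} (hG : G.IsTree) (F : Finset α)
    (S : α → Set V) (hconvex : ∀ i ∈ F, G.IsPathConvex (S i))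
    (hpair : ∀ i ∈ F, ∀ j ∈ F, (S i ∩ S j).Nonempty) :
    ∃ x, ∀ i ∈ F, x ∈ S i := by
  classical
  induction F using Finset.induction_on generalizing S with
  | empty => exact ⟨hG.connected.nonempty.some, by simp⟩
  | @insert a F ha ih =>
    rcases F.eq_empty_or_nonempty with rfl | ⟨j, hj⟩
    · obtain ⟨x, hx, -⟩ := hpair a (by simp) a (by simp)
      exact ⟨x, by simpa using hx⟩
    have hmem : ∀ i ∈ F, i ∈ insert a F := fun i hi => F.mem_insert_of_mem hi
    have ha' : a ∈ insert a F := F.mem_insert_self a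
    -- intersecting the family with `S a` preserves convexity and, by the case of three sets,
    -- pairwise intersection
    obtain ⟨x, hx⟩ := ih (fun i => S i ∩ S a)
      (fun i hi => (hconvex i (hmem i hi)).inter (hconvex a ha'))
      (fun i hi j hj => by
        obtain ⟨x, ⟨hxi, hxj⟩, hxa⟩ := hG.isAcyclic.inter_inter_nonempty_of_isPathConvex
          hG.connected.preconnected (hconvex i (hmem i hi)) (hconvex j (hmem j hj))
          (hconvex a ha') (hpair i (hmem i hi) j (hmem j hj))
          (hpair i (hmem i hi) a ha') (hpair j (hmem j hj) a ha')
        exact ⟨x, ⟨hxi, hxa⟩, hxj, hxa⟩)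
    refine ⟨x, fun i hi => ?_⟩
    rcases F.mem_insert.mp hi with rfl | hi
    · exact (hx j hj).2
    · exact (hx i hi).1

end SimpleGraph

def IsIndepSet {V : Type*} (E : Finset (Finset V)) (S : Finset V) : Prop :=
  ∀ x ∈ S, ∀ y ∈ S, x ≠ y → ¬ Nbr E x y

section Hypergraph

variable {V : Type*} {E : Finset (Finset V)}

theorem Nbr.symm {x y : V} (h : Nbr E x y) : Nbr E y x :=
  let ⟨e, he, hx, hy⟩ := h
  ⟨e, he, hy, hx⟩

theorem isIndepSet_pair [DecidableEq V] {x y : V} (h : ¬ Nbr E x y) : IsIndepSet E {x, y} := by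
  simp only [IsIndepSet, Finset.mem_insert, Finset.mem_singleton]
  rintro a (rfl | rfl) b (rfl | rfl) hab
  exacts [absurd rfl hab, h, fun h' => h h'.symm, absurd rfl hab]

theorem IsIndepSet.card_le_one_of_subset {S e : Finset V} (hS : IsIndepSet E S) (he : e ∈ E)
    (hSe : S ⊆ e) : S.card ≤ 1 :=
  Finset.card_le_one.mpr fun x hx y hy =>
    by_contra fun hxy => hS x hx y hy hxy ⟨e, he, hSe hx, hSe hy⟩

theorem nbr_of_forall_isIndepSet_card_le_one {F : Finset V}
    (hF : ∀ S ⊆ F, IsIndepSet E S → S.card ≤ 1) {x y : V} (hx : x ∈ F) (hy : y ∈ F)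
    (hxy : x ≠ y) : Nbr E x y := by
  classical
  by_contra hn
  have hcard := hF {x, y} (Finset.insert_subset hx (Finset.singleton_subset_iff.mpr hy))
    (isIndepSet_pair hn)
  rw [Finset.card_pair hxy] at hcard
  omega

end Hypergraph

section JoinTree

variable {V ι : Type*} {T : SimpleGraph ι} {lab : ι → Finset V} {E : Finset (Finset V)}

theorem IsJoinTreeOf.isPathConvex (h : IsJoinTreeOf T lab E) (v : V) :
    T.IsPathConvex {i | v ∈ lab i} :=
  h.1.isAcyclic.isPathConvex_of_preconnected_induce (h.2.2.2 v)

theorem IsJoinTreeOf.inter_nonempty_of_nbr (h : IsJoinTreeOf T lab E) {u v : V}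
    (huv : Nbr E u v) : ({i | u ∈ lab i} ∩ {i | v ∈ lab i}).Nonempty := by
  obtain ⟨e, he, hu, hv⟩ := huv
  obtain ⟨i, rfl⟩ := h.2.2.1 e he
  exact ⟨i, hu, hv⟩

theorem IsJoinTreeOf.exists_subset_of_pairwise_nbr (h : IsJoinTreeOf T lab E) (F : Finset V)
    (hF : ∀ u ∈ F, ∀ v ∈ F, Nbr E u v) : ∃ e ∈ E, F ⊆ e := by
  obtain ⟨i, hi⟩ := h.1.exists_forall_mem_of_isPathConvex F (fun v => {i | v ∈ lab i})
    (fun v _ => h.isPathConvex v) (fun u hu v hv => h.inter_nonempty_of_nbr (hF u hu v hv))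
  exact ⟨lab i, h.2.1 i, hi⟩

end JoinTree

theorem atom_contains_free_iff_alpha_le_one_general {V : Type*}
    (E : Finset (Finset V)) (free : Finset V)
    (hfree : ∀ v ∈ free, ∃ e ∈ E, v ∈ e)
    (hacyc : HGAcyclic E) :
    (∃ e ∈ E, free ⊆ e) ↔
      ∀ S : Finset V, S ⊆ free →
        (∀ x ∈ S, ∀ y ∈ S, x ≠ y → ¬ Nbr E x y) → S.card ≤ 1 := by
  constructor
  · rintro ⟨e, he, hfree_e⟩ S hS hindep
    exact IsIndepSet.card_le_one_of_subset hindep he (hS.trans hfree_e)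
  · intro halpha
    obtain ⟨ι, T, lab, hT⟩ := hacyc
    refine hT.exists_subset_of_pairwise_nbr free fun u hu v hv => ?_
    rcases eq_or_ne u v with rfl | huv
    · obtain ⟨e, he, hue⟩ := hfree u hu
      exact ⟨e, he, hue, hue⟩
    · exact nbr_of_forall_isIndepSet_card_le_one halpha hu hv huv

/-- For an acyclic conjunctive query (modeled by its hypergraph `E`
with free variables `free`, each free variable occurring in some atom), some atom
contains all free variables iff every independent set of free variables has at most
one element (`α_free(Q) ≤ 1`). -/
theorem atom_contains_free_iff_alpha_le_one {V : Type*} [DecidableEq V]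
    (E : Finset (Finset V)) (free : Finset V)
    (hE : E.Nonempty)
    (hfree : ∀ v ∈ free, ∃ e ∈ E, v ∈ e)
    (hacyc : HGAcyclic E) :
    (∃ e ∈ E, free ⊆ e) ↔
      ∀ S : Finset V, S ⊆ free →
        (∀ x ∈ S, ∀ y ∈ S, x ≠ y → ¬ Nbr E x y) → S.card ≤ 1 :=
  atom_contains_free_iff_alpha_le_one_general E free hfree hacyc
end

section
/- Let H be an acyclic hypergraph and x a vertex such that every two neighbors of x are themselves neighbors. Then there exists a hyperedge of H containing x together with all of its neighbors. -/
open SimpleGraph Walk in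
private lemma takeUntil_cons' {ι : Type} [DecidableEq ι] {T : SimpleGraph ι} {i v j u : ι}
    (h : T.Adj i v) (p : T.Walk v j)
    (hu : u ∈ (Walk.cons h p).support) (hne : i ≠ u) :
    ∃ hu', (Walk.cons h p).takeUntil u hu = Walk.cons h (p.takeUntil u hu') := by
  have hu' : u ∈ p.support := by
    have := (Walk.support_cons h p) ▸ hu
    rcases List.mem_cons.mp this with h1 | h1
    · exact absurd h1.symm hne
    · exact h1
  refine ⟨hu', ?_⟩
  rw [Walk.takeUntil]
  simp [hne]

open SimpleGraph Walk in
/-- Median of three vertices in a tree: there is a vertex on all three connecting paths. -/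
private lemma tree_median {ι : Type} {T : SimpleGraph ι} (hT : T.IsTree) :
    ∀ (n : ℕ) {i j k : ι} (p : T.Walk i j) (q : T.Walk i k) (r : T.Walk j k),
      p.length ≤ n → p.IsPath → q.IsPath → r.IsPath →
      ∃ m, m ∈ p.support ∧ m ∈ q.support ∧ m ∈ r.support := by
  classical
  intro n
  induction n with
  | zero =>
    intro i j k p q r hlen hp hq hr
    have hij : i = j := Walk.eq_of_length_eq_zero (Nat.le_zero.mp hlen)
    subst hij
    exact ⟨i, p.start_mem_support, q.start_mem_support, r.start_mem_support⟩
  | succ n ih =>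
    intro i j k p q r hlen hp hq hr
    cases p with
    | nil => exact ⟨i, by simp, q.start_mem_support, r.start_mem_support⟩
    | @cons _ v _ hadj p' =>
      cases q with
      | nil => exact ⟨i, (Walk.cons hadj p').start_mem_support, by simp, r.end_mem_support⟩
      | @cons _ w _ hadj2 q' =>
        by_cases hvw : v = w
        · subst hvw
          obtain ⟨m, hm1, hm2, hm3⟩ := ih p' q' r
            (Nat.succ_le_succ_iff.mp (by simpa using hlen))
            hp.of_cons hq.of_cons hr
          exact ⟨m, by simp [hm1], by simp [hm2], hm3⟩
        · set p : T.Walk i j := Walk.cons hadj p' with hpdef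
          set q : T.Walk i k := Walk.cons hadj2 q' with hqdef
          have hkey : ∀ u, u ∈ p.support → u ∈ q.support → u = i := by
            intro u hup huq
            by_contra hne
            obtain ⟨hu1, e1⟩ := takeUntil_cons' hadj p' hup (Ne.symm hne)
            obtain ⟨hu2, e2⟩ := takeUntil_cons' hadj2 q' huq (Ne.symm hne)
            have ht1 : (p.takeUntil u hup).IsPath := hp.takeUntil hup
            have ht2 : (q.takeUntil u huq).IsPath := hq.takeUntil huq
            have heq : p.takeUntil u hup = q.takeUntil u huq := by
              have := hT.IsAcyclic.path_unique ⟨p.takeUntil u hup, ht1⟩ ⟨q.takeUntil u huq, ht2⟩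
              exact congrArg Subtype.val this
            have : v = w := by
              have h1 : (p.takeUntil u hup).getVert 1 = v := by
                rw [e1]; simp [Walk.getVert_cons_succ, Walk.getVert_zero]
              have h2 : (q.takeUntil u huq).getVert 1 = w := by
                rw [e2]; simp [Walk.getVert_cons_succ, Walk.getVert_zero]
              rw [heq] at h1; rw [h1] at h2; exact h2
            exact hvw this
          have hWpath : (p.reverse.append q).IsPath := by
            rw [Walk.isPath_def, Walk.support_append, Walk.support_reverse]
            refine List.Nodup.append (List.nodup_reverse.mpr hp.support_nodup) ?_ ?_
            · exact hq.support_nodup.tail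
            · intro u hu1 hu2
              have hup : u ∈ p.support := List.mem_reverse.mp hu1
              have huq : u ∈ q.support := List.mem_of_mem_tail hu2
              have hui : u = i := hkey u hup huq
              rw [hui] at hu2
              have hqs : q.support = i :: q'.support := Walk.support_cons hadj2 q'
              rw [hqs] at hu2
              simp at hu2
              exact (Walk.cons_isPath_iff hadj2 q').mp hq |>.2 hu2
          have hr' : r = p.reverse.append q := by
            have := hT.IsAcyclic.path_unique ⟨r, hr⟩ ⟨p.reverse.append q, hWpath⟩
            exact congrArg Subtype.val this
          refine ⟨i, p.start_mem_support, q.start_mem_support, ?_⟩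
          rw [hr', Walk.mem_support_append_iff]
          exact Or.inr q.start_mem_support

open SimpleGraph Walk in
private lemma exists_walk_in_set {ι : Type} {T : SimpleGraph ι}
    (A : Set ι) (hA : (T.induce A).Preconnected)
    {a b : ι} (ha : a ∈ A) (hb : b ∈ A) :
    ∃ w : T.Walk a b, ∀ u ∈ w.support, u ∈ A := by
  obtain ⟨w'⟩ := hA ⟨a, ha⟩ ⟨b, hb⟩
  let f : T.induce A →g T := ⟨Subtype.val, fun {c d} h => h⟩
  refine ⟨w'.map f, ?_⟩
  intro u hu
  rw [Walk.support_map] at hu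
  obtain ⟨⟨u', hu'⟩, _, rfl⟩ := List.mem_map.mp hu
  exact hu'

open SimpleGraph Walk in
/-- In an acyclic hypergraph, if every two neighbors of a vertex `x`
are themselves neighbors (the neighborhood of `x` is a clique), then some hyperedge
contains `x` together with all of its neighbors. -/
theorem edge_covers_clique_neighborhood {V : Type*}
    (E : Finset (Finset V)) (hacyc : HGAcyclic E)
    (x : V) (hx : ∃ e ∈ E, x ∈ e)
    (hclique : ∀ a b : V, a ≠ x → b ≠ x → Nbr E x a → Nbr E x b → Nbr E a b) :
    ∃ e ∈ E, x ∈ e ∧ ∀ y : V, y ≠ x → Nbr E x y → y ∈ e := by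
  classical
  obtain ⟨e0, he0, hxe0⟩ := hx
  obtain ⟨ι, T, lab, hT, hmem, hsur, hcc⟩ := hacyc
  -- the canonical path between two tree nodes
  have hpath : ∀ a b : ι, ∃ p : T.Walk a b, p.IsPath ∧ ∀ q : T.Walk a b, q.IsPath → q = p := by
    intro a b
    obtain ⟨p, hp, hu⟩ := hT.existsUnique_path a b
    exact ⟨p, hp, hu⟩
  choose pth hpth huniq using hpath
  -- running intersection along paths
  have hlabconn : ∀ (v : V) (a b : ι), v ∈ lab a → v ∈ lab b →
      ∀ m ∈ (pth a b).support, v ∈ lab m := by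
    intro v a b ha hb m hm
    obtain ⟨w, hw⟩ := exists_walk_in_set {i | v ∈ lab i} (hcc v) ha hb
    have hbp : w.bypass = pth a b := huniq a b w.bypass w.bypass_isPath
    exact hw m (w.support_bypass_subset (hbp ▸ hm))
  -- the (finite) neighborhood of x
  set N : Finset V := (E.biUnion id).filter (fun y => y ≠ x ∧ Nbr E x y) with hNdef
  have hN : ∀ y, y ∈ N ↔ (y ≠ x ∧ Nbr E x y) := by
    intro y
    rw [hNdef, Finset.mem_filter]
    constructor
    · exact fun h => h.2
    · rintro ⟨h1, h2⟩
      obtain ⟨e, he, hxe, hye⟩ := h2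
      exact ⟨Finset.mem_biUnion.mpr ⟨e, he, hye⟩, h1, e, he, hxe, hye⟩
  -- main climb
  have claim : ∀ n : ℕ, ∀ i : ι, x ∈ lab i → (N \ lab i).card ≤ n →
      ∃ j : ι, x ∈ lab j ∧ ∀ y ∈ N, y ∈ lab j := by
    intro n
    induction n with
    | zero =>
      intro i hxi hcard
      refine ⟨i, hxi, fun y hy => ?_⟩
      by_contra hyl
      have h1 : y ∈ N \ lab i := Finset.mem_sdiff.mpr ⟨hy, hyl⟩
      have h2 : N \ lab i = ∅ := Finset.card_eq_zero.mp (Nat.le_zero.mp hcard)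
      rw [h2] at h1
      exact absurd h1 (Finset.notMem_empty y)
    | succ n ih =>
      intro i hxi hcard
      by_cases hsub : ∀ y ∈ N, y ∈ lab i
      · exact ⟨i, hxi, hsub⟩
      push_neg at hsub
      obtain ⟨y, hyN, hyi⟩ := hsub
      obtain ⟨hyx, hyNbr⟩ := (hN y).mp hyN
      obtain ⟨e1, he1, hxe1, hye1⟩ := hyNbr
      obtain ⟨j0, hj0⟩ := hsur e1 he1
      set S : Set ι := {j | x ∈ lab j ∧ y ∈ lab j} with hSdef
      have hSne : S.Nonempty := ⟨j0, by rw [hSdef]; exact ⟨hj0 ▸ hxe1, hj0 ▸ hye1⟩⟩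
      obtain ⟨nmin, ⟨j, hjS, rfl⟩, hmin0⟩ :=
        Nat.lt_wfRel.wf.has_min ((fun j => (pth i j).length) '' S) (hSne.image _)
      have hmin : ∀ j' ∈ S, (pth i j).length ≤ (pth i j').length := fun j' hj' =>
        Nat.le_of_not_lt (hmin0 _ ⟨j', hj', rfl⟩)
      have hxj : x ∈ lab j := hjS.1
      have hyj : y ∈ lab j := hjS.2
      have hcarry : ∀ z ∈ N, z ∈ lab i → z ∈ lab j := by
        intro z hzN hzi
        by_cases hzy : z = y
        · exact hzy ▸ hyj
        obtain ⟨hzx, hzNbr⟩ := (hN z).mp hzN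
        obtain ⟨e2, he2, hze2, hye2⟩ := hclique z y hzx hyx hzNbr
          ((hN y).mp hyN).2
        obtain ⟨k, hk⟩ := hsur e2 he2
        obtain ⟨m, hm1, hm2, hm3⟩ := tree_median hT (pth i j).length
          (pth i j) (pth i k) (pth j k) le_rfl (hpth i j) (hpth i k) (hpth j k)
        have hxm : x ∈ lab m := hlabconn x i j hxi hxj m hm1
        have hzm : z ∈ lab m := hlabconn z i k hzi (hk ▸ hze2) m hm2
        have hym : y ∈ lab m := hlabconn y j k hyj (hk ▸ hye2) m hm3
        have hmS : m ∈ S := ⟨hxm, hym⟩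
        have hmin' : (pth i j).length ≤ (pth i m).length := hmin m hmS
        have htk : ((pth i j).takeUntil m hm1).IsPath := (hpth i j).takeUntil hm1
        have htk' : (pth i j).takeUntil m hm1 = pth i m := huniq i m _ htk
        have hlen : ((pth i j).takeUntil m hm1).length
            + ((pth i j).dropUntil m hm1).length = (pth i j).length := by
          rw [← Walk.length_append, Walk.take_spec]
        have hd0 : ((pth i j).dropUntil m hm1).length = 0 := by
          rw [htk'] at hlen
          omega
        have hmj : m = j := Walk.eq_of_length_eq_zero hd0
        exact hmj ▸ hzm
      have hsubset : N \ lab j ⊆ (N \ lab i).erase y := by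
        intro z hz
        obtain ⟨hzN, hzj⟩ := Finset.mem_sdiff.mp hz
        refine Finset.mem_erase.mpr ⟨fun h => hzj (h ▸ hyj), Finset.mem_sdiff.mpr ⟨hzN, ?_⟩⟩
        exact fun hzi => hzj (hcarry z hzN hzi)
      have hylabi : y ∈ N \ lab i := Finset.mem_sdiff.mpr ⟨hyN, hyi⟩
      have hcard' : (N \ lab j).card ≤ n := by
        have h1 := Finset.card_le_card hsubset
        have h2 : ((N \ lab i).erase y).card = (N \ lab i).card - 1 :=
          Finset.card_erase_of_mem hylabi
        have h3 : 1 ≤ (N \ lab i).card := Finset.card_pos.mpr ⟨y, hylabi⟩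
        omega
      exact ih j hxj hcard'
  obtain ⟨i0, hi0⟩ := hsur e0 he0
  obtain ⟨j, hxj, hNj⟩ := claim (N \ lab i0).card i0 (hi0 ▸ hxe0) le_rfl
  exact ⟨lab j, hmem j, hxj, fun y hy hnbr => hNj y ((hN y).mpr ⟨hy, hnbr⟩)⟩
end

section
/- Let Q be a full acyclic conjunctive query with a set of variables {x,y} that is a maximum independent set of free variables (α_free(Q)=2), and suppose the number of maximal hyperedges of H(Q) is greater than 2. If each of x and y appears in exactly one maximal hyperedge, then H(Q) contains a chordless path of four vertices x–a–b–y. -/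
/-- The maximal hyperedges of a hypergraph (w.r.t. strict containment). -/
def maximalEdges {V : Type*} [DecidableEq V] (E : Finset (Finset V)) :
    Finset (Finset V) :=
  E.filter fun e => ∀ e' ∈ E, ¬ e ⊂ e'

/-- A chordless path of four (distinct) vertices: consecutive vertices are
neighbors, non-consecutive vertices are not. -/
def ChordlessPath4 {V : Type*} (E : Finset (Finset V)) (a b c d : V) : Prop :=
  a ≠ b ∧ a ≠ c ∧ a ≠ d ∧ b ≠ c ∧ b ≠ d ∧ c ≠ d ∧
  Nbr E a b ∧ Nbr E b c ∧ Nbr E c d ∧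
  ¬ Nbr E a c ∧ ¬ Nbr E a d ∧ ¬ Nbr E b d

section Nbr

variable {V : Type*} {E : Finset (Finset V)} {a b c d : V}

theorem Nbr.symm_s5 (h : Nbr E a b) : Nbr E b a :=
  let ⟨e, he, ha, hb⟩ := h
  ⟨e, he, hb, ha⟩

theorem nbr_self_iff : Nbr E a a ↔ ∃ e ∈ E, a ∈ e := by
  simp [Nbr]

theorem Nbr.left_self (h : Nbr E a b) : Nbr E a a :=
  let ⟨e, he, ha, _⟩ := h
  ⟨e, he, ha, ha⟩

theorem Nbr.right_self (h : Nbr E a b) : Nbr E b b :=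
  h.symm_s5.left_self

/-- The six distinctness conditions of a chordless path are forced by its adjacencies. -/
theorem chordlessPath4_of_nbr (hab : Nbr E a b) (hbc : Nbr E b c) (hcd : Nbr E c d)
    (hac : ¬ Nbr E a c) (had : ¬ Nbr E a d) (hbd : ¬ Nbr E b d) :
    ChordlessPath4 E a b c d := by
  refine ⟨?_, ?_, ?_, ?_, ?_, ?_, hab, hbc, hcd, hac, had, hbd⟩
  · rintro rfl; exact hac hbc
  · rintro rfl; exact hac hab.left_self
  · rintro rfl; exact had hab.left_self
  · rintro rfl; exact hbd hcd
  · rintro rfl; exact hbd hab.right_self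
  · rintro rfl; exact hbd hbc

theorem nbr_of_independent_card_le_two [DecidableEq V]
    (hα : ∀ S : Finset V, (∀ v ∈ S, ∃ e ∈ E, v ∈ e) →
      (∀ a ∈ S, ∀ b ∈ S, a ≠ b → ¬ Nbr E a b) → S.card ≤ 2)
    (ha : ∃ e ∈ E, a ∈ e) (hb : ∃ e ∈ E, b ∈ e) (hc : ∃ e ∈ E, c ∈ e)
    (hab : ¬ Nbr E a b) (hac : ¬ Nbr E a c) : Nbr E b c := by
  by_contra hbc
  have hne : ∀ {u v : V}, (∃ e ∈ E, u ∈ e) → ¬ Nbr E u v → u ≠ v := by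
    rintro u v hu huv rfl
    exact huv (nbr_self_iff.2 hu)
  have hcard : ({a, b, c} : Finset V).card = 3 :=
    Finset.card_eq_three.2 ⟨a, b, c, hne ha hab, hne ha hac, hne hb hbc, rfl⟩
  have hindep : ∀ u ∈ ({a, b, c} : Finset V), ∀ v ∈ ({a, b, c} : Finset V),
      u ≠ v → ¬ Nbr E u v := by
    intro u hu v hv huv
    simp only [Finset.mem_insert, Finset.mem_singleton] at hu hv
    rcases hu with rfl | rfl | rfl <;> rcases hv with rfl | rfl | rfl <;>
      first
      | exact absurd rfl huv
      | assumption
      | exact fun h => hab h.symm_s5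
      | exact fun h => hac h.symm_s5
      | exact fun h => hbc h.symm_s5
  have := hα {a, b, c} (by simp [ha, hb, hc]) hindep
  omega

end Nbr

section maximalEdges

variable {V : Type*} [DecidableEq V] {E : Finset (Finset V)}

theorem mem_of_mem_maximalEdges {e : Finset V} (he : e ∈ maximalEdges E) : e ∈ E :=
  (Finset.mem_filter.1 he).1

theorem exists_mem_maximalEdges_superset {e : Finset V} (he : e ∈ E) :
    ∃ m ∈ maximalEdges E, e ⊆ m := by
  obtain ⟨m, hm, hmax⟩ := Finset.exists_maximal (s := E.filter (e ⊆ ·)) ⟨e, by simp [he]⟩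
  rw [Finset.mem_filter] at hm
  refine ⟨m, Finset.mem_filter.2 ⟨hm.1, fun e' he' hlt => ?_⟩, hm.2⟩
  exact hlt.2 (hmax (Finset.mem_filter.2 ⟨he', hm.2.trans hlt.subset⟩) hlt.subset)

theorem not_subset_of_mem_maximalEdges {f e : Finset V} (hf : f ∈ maximalEdges E)
    (he : e ∈ E) (hfe : f ≠ e) : ¬ f ⊆ e :=
  fun h => (Finset.mem_filter.1 hf).2 e he (h.ssubset_of_ne hfe)

theorem nbr_iff_mem_of_unique {x v : V} {m : Finset V} (hm : m ∈ E) (hxm : x ∈ m)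
    (hu : ∀ e ∈ maximalEdges E, x ∈ e → e = m) : Nbr E x v ↔ v ∈ m := by
  refine ⟨fun ⟨e, he, hxe, hve⟩ => ?_, fun hv => ⟨m, hm, hxm, hv⟩⟩
  obtain ⟨e', he', hee'⟩ := exists_mem_maximalEdges_superset he
  exact hu e' he' (hee' hxe) ▸ hee' hve

end maximalEdges

theorem chordless_four_path_case_one_general {V : Type*} [DecidableEq V]
    (E : Finset (Finset V))
    (x y : V) (hnxy : ¬ Nbr E x y)
    (halpha : ∀ S : Finset V, (∀ v ∈ S, ∃ e ∈ E, v ∈ e) →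
        (∀ a ∈ S, ∀ b ∈ S, a ≠ b → ¬ Nbr E a b) → S.card ≤ 2)
    (hmh : 2 < (maximalEdges E).card)
    (hux : ∃! e, e ∈ maximalEdges E ∧ x ∈ e)
    (huy : ∃! e, e ∈ maximalEdges E ∧ y ∈ e) :
    ∃ a b : V, ChordlessPath4 E x a b y := by
  obtain ⟨ex, ⟨hexM, hxex⟩, hux⟩ := hux
  obtain ⟨ey, ⟨heyM, hyey⟩, huy⟩ := huy
  have hexE := mem_of_mem_maximalEdges hexM
  have heyE := mem_of_mem_maximalEdges heyM
  have nbrx (v : V) : Nbr E x v ↔ v ∈ ex :=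
    nbr_iff_mem_of_unique hexE hxex fun e he hxe => hux e ⟨he, hxe⟩
  have nbry (v : V) : Nbr E y v ↔ v ∈ ey :=
    nbr_iff_mem_of_unique heyE hyey fun e he hye => huy e ⟨he, hye⟩
  obtain ⟨f, hfM, hf⟩ := Finset.exists_mem_notMem_of_card_lt_card
    ((Finset.card_le_two (a := ex) (b := ey)).trans_lt hmh)
  simp only [Finset.mem_insert, Finset.mem_singleton, not_or] at hf
  have hfE := mem_of_mem_maximalEdges hfM
  have hf_sub (z : V) (hz : z ∈ f) : z ∈ ex ∨ z ∈ ey := by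
    by_contra! h
    exact h.2 <| (nbry z).1 <| nbr_of_independent_card_le_two halpha ⟨ex, hexE, hxex⟩
      ⟨ey, heyE, hyey⟩ ⟨f, hfE, hz⟩ hnxy (mt (nbrx z).1 h.1)
  obtain ⟨a, haf, haey⟩ := Finset.not_subset.1 (not_subset_of_mem_maximalEdges hfM heyE hf.2)
  obtain ⟨b, hbf, hbex⟩ := Finset.not_subset.1 (not_subset_of_mem_maximalEdges hfM hexE hf.1)
  have haex := (hf_sub a haf).resolve_right haey
  have hbey := (hf_sub b hbf).resolve_left hbex
  exact ⟨a, b, chordlessPath4_of_nbr ((nbrx a).2 haex) ⟨f, hfE, haf, hbf⟩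
    ((nbry b).2 hbey).symm_s5 (mt (nbrx b).1 hbex) hnxy fun h => haey ((nbry a).1 h.symm_s5)⟩

/-- Let `Q` be a full acyclic CQ (all variables free) with
`{x, y}` a maximum independent set (so `α_free(Q) = 2`, expressed by: `x, y` are
independent and every independent set of vertices has size at most 2), whose
hypergraph has more than two maximal hyperedges.  If each of `x` and `y` appears
in exactly one maximal hyperedge, then `H(Q)` contains a chordless path
`x – a – b – y` of four vertices. -/
theorem chordless_four_path_case_one {V : Type*} [DecidableEq V]
    (E : Finset (Finset V)) (hacyc : HGAcyclic E)
    (x y : V) (hxy : x ≠ y) (hnxy : ¬ Nbr E x y)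
    (hx : ∃ e ∈ E, x ∈ e) (hy : ∃ e ∈ E, y ∈ e)
    (halpha : ∀ S : Finset V, (∀ v ∈ S, ∃ e ∈ E, v ∈ e) →
        (∀ a ∈ S, ∀ b ∈ S, a ≠ b → ¬ Nbr E a b) → S.card ≤ 2)
    (hmh : 2 < (maximalEdges E).card)
    (hux : ∃! e, e ∈ maximalEdges E ∧ x ∈ e)
    (huy : ∃! e, e ∈ maximalEdges E ∧ y ∈ e) :
    ∃ a b : V, ChordlessPath4 E x a b y :=
  chordless_four_path_case_one_general E x y hnxy halpha hmh hux huy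
end

section
/- Let T be an ext-free(Q)-connex tree for a CQ Q with subtree T' containing exactly the free variables. Then two free variables are neighbors in T (appear together in some node of T) if and only if they are neighbors in T' (appear together in some node of T'). Consequently, Q has a disruptive trio with respect to an order L of the free variables in T if and only if it has one in T'. -/
/-!
The nodes whose labels contain a fixed variable form a subtree (running intersection
property), and so does `S`. Subtrees of a tree have the Helly property: if three of them
pairwise meet, they share a node. Indeed, pick one meeting point per pair; the three paths
between these points have a common vertex (their median), and each path lies inside the
subtree containing both of its endpoints, because paths in a tree are unique. If two free
variables `u`, `v` occur together in some node, the subtrees of `u`, of `v`, and `S` pairwise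
meet, so some node of `S` contains both. Disruptive trios only involve the neighbor relation
on free variables, hence are the same for `T` and for its subtree.
-/

/-- A disruptive trio w.r.t. a neighborhood relation `nbr` and an order `L`. -/
def DTrio {V : Type*} [DecidableEq V] (nbr : V → V → Prop) (L : List V) : Prop :=
  ∃ a b c, a ∈ L ∧ b ∈ L ∧ c ∈ L ∧ a ≠ b ∧ ¬ nbr a b ∧ nbr a c ∧ nbr b c ∧
    L.idxOf a < L.idxOf c ∧ L.idxOf b < L.idxOf c

theorem dTrio_congr {V : Type*} [DecidableEq V] {nbr nbr' : V → V → Prop} {L : List V}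
    (h : ∀ a ∈ L, ∀ b ∈ L, nbr a b ↔ nbr' a b) : DTrio nbr L ↔ DTrio nbr' L :=
  exists₃_congr fun a b c => and_congr_right fun ha => and_congr_right fun hb =>
    and_congr_right fun hc => by rw [h a ha b hb, h a ha c hc, h b hb c hc]

namespace SimpleGraph

variable {ι : Type*} {G : SimpleGraph ι}

theorem exists_isPath_support_subset_of_preconnected_induce {X : Set ι}
    (hX : (G.induce X).Preconnected) {a b : ι} (ha : a ∈ X) (hb : b ∈ X) :
    ∃ p : G.Walk a b, p.IsPath ∧ ∀ x ∈ p.support, x ∈ X := by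
  classical
  obtain ⟨w⟩ := hX ⟨a, ha⟩ ⟨b, hb⟩
  let w' : G.Walk a b := w.map (Embedding.induce X).toHom
  refine ⟨w'.bypass, w'.bypass_isPath, fun x hx => ?_⟩
  obtain ⟨y, -, rfl⟩ :=
    List.mem_map.mp (w.support_map _ ▸ w'.support_bypass_subset_support hx)
  exact y.2

theorem IsAcyclic.support_subset_of_preconnected_induce (hG : G.IsAcyclic) {X : Set ι}
    (hX : (G.induce X).Preconnected) {a b : ι} {p : G.Walk a b} (hp : p.IsPath)
    (ha : a ∈ X) (hb : b ∈ X) : ∀ x ∈ p.support, x ∈ X := by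
  obtain ⟨q, hq, hqX⟩ := exists_isPath_support_subset_of_preconnected_induce hX ha hb
  obtain rfl : p = q :=
    congrArg Subtype.val ((hG.subsingleton_path a b).elim ⟨p, hp⟩ ⟨q, hq⟩)
  exact hqX

theorem Walk.IsPath.exists_path_through_common_vertex {j k i : ι} {p : G.Walk j i}
    {q : G.Walk k i} (hp : p.IsPath) (hq : q.IsPath) :
    ∃ m ∈ p.support, m ∈ q.support ∧ ∃ r : G.Walk j k, r.IsPath ∧ m ∈ r.support ∧
      ∀ x ∈ r.support, x ∈ p.support ∨ x ∈ q.support := by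
  classical
  induction p with
  | nil =>
    exact ⟨_, Walk.start_mem_support _, q.end_mem_support, q.reverse, hq.reverse, by simp,
      fun x hx => Or.inr (by simpa using hx)⟩
  | @cons j j' i hadj p' ih =>
    rw [Walk.cons_isPath_iff] at hp
    by_cases hj : j ∈ q.support
    · exact ⟨j, Walk.start_mem_support _, hj, (q.takeUntil j hj).reverse,
        (hq.takeUntil hj).reverse, by simp,
        fun x hx => Or.inr (q.support_takeUntil_subset_support hj (by simpa using hx))⟩
    · obtain ⟨m, hmp, hmq, r, hr, hmr, hsub⟩ := ih hp.1 hq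
      have hjr : j ∉ r.support := fun hjr => (hsub j hjr).elim hp.2 hj
      refine ⟨m, by simp [hmp], hmq, Walk.cons hadj r, hr.cons hjr, by simp [hmr], ?_⟩
      intro x hx
      rw [Walk.support_cons, List.mem_cons] at hx
      rcases hx with rfl | hx
      · exact Or.inl (Walk.start_mem_support _)
      · exact (hsub x hx).imp (fun h => by simp [h]) id

theorem IsAcyclic.inter_inter_nonempty_of_preconnected_induce (hG : G.IsAcyclic)
    {A B C : Set ι} (hA : (G.induce A).Preconnected) (hB : (G.induce B).Preconnected)
    (hC : (G.induce C).Preconnected) (hAB : (A ∩ B).Nonempty) (hAC : (A ∩ C).Nonempty)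
    (hBC : (B ∩ C).Nonempty) : (A ∩ B ∩ C).Nonempty := by
  obtain ⟨a, haB, haC⟩ := hBC
  obtain ⟨b, hbA, hbC⟩ := hAC
  obtain ⟨c, hcA, hcB⟩ := hAB
  obtain ⟨p, hp, hpC⟩ := exists_isPath_support_subset_of_preconnected_induce hC hbC haC
  obtain ⟨q, hq, hqB⟩ := exists_isPath_support_subset_of_preconnected_induce hB hcB haB
  obtain ⟨m, hmp, hmq, r, hr, hmr, -⟩ := hp.exists_path_through_common_vertex hq
  exact ⟨m, ⟨hG.support_subset_of_preconnected_induce hA hr hbA hcA m hmr, hqB m hmq⟩,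
    hpC m hmp⟩

end SimpleGraph

theorem neighbors_in_tree_iff_in_subtree_general {V ι : Type*} [DecidableEq V]
    (free : Finset V)
    (G : SimpleGraph ι) (hG : G.IsTree) (lab : ι → Finset V)
    (hrip : ∀ v : V, (G.induce {i | v ∈ lab i}).Preconnected)
    (S : Set ι) (hconn : (G.induce S).Preconnected)
    (hcov : ∀ v : V, v ∈ free ↔ ∃ i ∈ S, v ∈ lab i) :
    (∀ u ∈ free, ∀ v ∈ free,
        ((∃ i, u ∈ lab i ∧ v ∈ lab i) ↔ (∃ i ∈ S, u ∈ lab i ∧ v ∈ lab i))) ∧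
    (∀ L : List V, (∀ x ∈ L, x ∈ free) →
        (DTrio (fun u v => ∃ i, u ∈ lab i ∧ v ∈ lab i) L ↔
         DTrio (fun u v => ∃ i ∈ S, u ∈ lab i ∧ v ∈ lab i) L)) := by
  have hnbr : ∀ u ∈ free, ∀ v ∈ free,
      ((∃ i, u ∈ lab i ∧ v ∈ lab i) ↔ (∃ i ∈ S, u ∈ lab i ∧ v ∈ lab i)) := by
    intro u hu v hv
    refine ⟨fun ⟨i, hui, hvi⟩ => ?_, fun ⟨i, _, hui, hvi⟩ => ⟨i, hui, hvi⟩⟩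
    obtain ⟨m, ⟨hmS, hmu⟩, hmv⟩ := hG.isAcyclic.inter_inter_nonempty_of_preconnected_induce
      hconn (hrip u) (hrip v) ((hcov u).mp hu) ((hcov v).mp hv) ⟨i, hui, hvi⟩
    exact ⟨m, hmS, hmu, hmv⟩
  exact ⟨hnbr, fun L hL => dTrio_congr fun a ha b hb => hnbr a (hL a ha) b (hL b hb)⟩

/-- Let `T` (tree `G` with node labels `lab`) be an
ext-`free(Q)`-connex tree for a CQ `Q`: a join tree of an inclusive extension of
`H(Q)` (every hyperedge of `E` is a node label and every node label is contained
in a hyperedge of `E`) satisfying the running intersection property, with a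
connected subtree `S` whose labels cover exactly the free variables.
Then two free variables are neighbors in `T` iff they are neighbors in the
subtree `S`; consequently, for any order `L` of free variables, there is a
disruptive trio w.r.t. the neighborhood relation of `T` iff there is one w.r.t.
the neighborhood relation of the subtree. -/
theorem neighbors_in_tree_iff_in_subtree {V ι : Type*} [DecidableEq V]
    (E : Finset (Finset V)) (free : Finset V)
    (G : SimpleGraph ι) (hG : G.IsTree) (lab : ι → Finset V)
    (hext1 : ∀ e ∈ E, ∃ i, lab i = e)
    (hext2 : ∀ i, ∃ e ∈ E, lab i ⊆ e)
    (hrip : ∀ v : V, (G.induce {i | v ∈ lab i}).Preconnected)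
    (S : Set ι) (hconn : (G.induce S).Preconnected)
    (hcov : ∀ v : V, v ∈ free ↔ ∃ i ∈ S, v ∈ lab i) :
    (∀ u ∈ free, ∀ v ∈ free,
        ((∃ i, u ∈ lab i ∧ v ∈ lab i) ↔ (∃ i ∈ S, u ∈ lab i ∧ v ∈ lab i))) ∧
    (∀ L : List V, (∀ x ∈ L, x ∈ free) →
        (DTrio (fun u v => ∃ i, u ∈ lab i ∧ v ∈ lab i) L ↔
         DTrio (fun u v => ∃ i ∈ S, u ∈ lab i ∧ v ∈ lab i) L)) :=
  neighbors_in_tree_iff_in_subtree_general free G hG lab hrip S hconn hcov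
end

section
/- If a CQ Q is both L1-connex and L2-connex for vertex sets L2 ⊆ L1, then there exists a join tree T of an inclusive extension of H(Q) with a subtree T1 containing exactly the vertices of L1 and a subtree T2 of T1 containing exactly the vertices of L2. -/
/-- A hypergraph `E` is `S`-connex: there is a join tree of an inclusive
extension of `E` (all hyperedges of `E` appear as node labels, all node labels
are contained in hyperedges of `E`), satisfying the running intersection
property, with a connected subtree whose labels cover exactly `S`. -/
def SConnex {V : Type*} (E : Finset (Finset V)) (S : Finset V) : Prop :=
  ∃ (ι : Type) (T : SimpleGraph ι) (lab : ι → Finset V),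
    T.IsTree ∧ (∀ e ∈ E, ∃ i, lab i = e) ∧ (∀ i, ∃ e ∈ E, lab i ⊆ e) ∧
    (∀ v : V, (T.induce {i | v ∈ lab i}).Preconnected) ∧
    ∃ Sub : Set ι, (T.induce Sub).Preconnected ∧
      ∀ v : V, v ∈ S ↔ ∃ i ∈ Sub, v ∈ lab i

/-!
Let `T₁` be a join tree witnessing that `E` is `L1`-connex, with subtree `N₁` covering `L1`,
and `T₂` one witnessing `L2`-connex, with subtree `N₂` covering `L2`. Remove `N₁` from `T₁`
and put all of `T₂` in its place, cutting every label of `T₂` down to `L1`; an edge of `T₁`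
from `x ∉ N₁` to `y ∈ N₁` is redirected to a node `φ y` of `T₂` whose label contains that
of `y`. Hyperedges inside `L1` still occur in `T₂` and the others in `T₁ \ N₁`; a vertex of
`L1` on the `T₁`-side reaches its `T₂`-nodes through such a redirected edge, since `N₁` is a
subtree. The copy of `T₂` covers exactly `L1`, and `N₂ ⊆ T₂` still covers `L2 ⊆ L1`.

The result is acyclic because every node has at most one neighbour below it in the order
"`T₂` below `T₁ \ N₁`, then by distance to a root", the root of `T₁` taken inside `N₁`.
-/

namespace SimpleGraph

variable {α β γ : Type*} {G : SimpleGraph α} {H : SimpleGraph β}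

theorem Reachable.map_of_adj_reachable {f : α → β}
    (hf : ∀ ⦃a b⦄, G.Adj a b → H.Reachable (f a) (f b)) {a b : α} (h : G.Reachable a b) :
    H.Reachable (f a) (f b) := by
  rw [reachable_iff_reflTransGen] at h ⊢
  exact h.lift' f fun _ _ hab => (reachable_iff_reflTransGen _ _).1 (hf hab)

theorem Preconnected.of_adj_reachable (hG : G.Preconnected) (f : α → β)
    (hf : ∀ ⦃a b⦄, G.Adj a b → H.Reachable (f a) (f b))
    (hcover : ∀ b, ∃ a, H.Reachable b (f a)) : H.Preconnected := by
  intro b b'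
  obtain ⟨a, ha⟩ := hcover b
  obtain ⟨a', ha'⟩ := hcover b'
  exact ha.trans (((hG a a').map_of_adj_reachable hf).trans ha'.symm)

theorem Preconnected.induce_image (f : G →g H) {s : Set α} (hs : (G.induce s).Preconnected) :
    (H.induce (f '' s)).Preconnected :=
  hs.map (induceHom f (Set.mapsTo_image f s)) (by rintro ⟨_, x, hx, rfl⟩; exact ⟨⟨x, hx⟩, rfl⟩)

theorem isAcyclic_of_unique_lower_adj [LinearOrder γ] (m : α → γ)
    (hne : ∀ ⦃u v⦄, G.Adj u v → m u ≠ m v)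
    (huniq : ∀ ⦃u v w⦄, G.Adj u v → G.Adj u w → m v < m u → m w < m u → v = w) :
    G.IsAcyclic := by
  classical
  intro x c hc
  obtain ⟨y, hy, hmax⟩ := c.support.toFinset.exists_max_image m ⟨x, by simp⟩
  rw [List.mem_toFinset] at hy
  set c' := c.rotate y hy
  have hc' : c'.IsCycle := hc.rotate hy
  -- a vertex of maximal `m` on a cycle has two distinct neighbours below it
  have hlt : ∀ z, G.Adj y z → z ∈ c'.support → m z < m y := fun z hz hzc =>
    (hmax z (by simpa [c'] using hzc)).lt_of_ne (hne hz).symm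
  have hsnd := c'.adj_snd hc'.not_nil
  have hpen := (c'.adj_penultimate hc'.not_nil).symm
  exact hc'.snd_ne_penultimate <| huniq hsnd hpen (hlt _ hsnd (c'.getVert_mem_support _))
    (hlt _ hpen (c'.getVert_mem_support _))

theorem IsAcyclic.length_eq_dist (hG : G.IsAcyclic) {u v : α} {p : G.Walk u v} (hp : p.IsPath) :
    p.length = G.dist u v := by
  obtain ⟨q, hq, hlen⟩ := p.reachable.exists_path_of_dist
  rw [← hlen, Subtype.mk.inj ((hG.subsingleton_path u v).elim ⟨p, hp⟩ ⟨q, hq⟩)]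

theorem IsAcyclic.eq_penultimate_of_dist_lt (hG : G.IsAcyclic) {r u v : α} {q : G.Walk r u}
    (hq : q.IsPath) (huv : G.Adj u v) (hvu : G.dist r v < G.dist r u) : v = q.penultimate := by
  by_contra hne
  have hvq : v ∉ q.support := fun h => hne (hG.eq_penultimate_of_adj_end hq huv h)
  have := hG.length_eq_dist (hq.concat hvq huv)
  rw [Walk.length_concat, hG.length_eq_dist hq] at this
  omega

theorem IsTree.eq_of_adj_of_dist_lt (hG : G.IsTree) (r : α) {u v w : α} (huv : G.Adj u v)
    (huw : G.Adj u w) (hvu : G.dist r v < G.dist r u) (hwu : G.dist r w < G.dist r u) :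
    v = w := by
  obtain ⟨q, hq⟩ := (hG.connected r u).exists_isPath
  rw [hG.isAcyclic.eq_penultimate_of_dist_lt hq huv hvu,
    hG.isAcyclic.eq_penultimate_of_dist_lt hq huw hwu]

theorem IsTree.dist_lt_of_adj_of_notMem (hG : G.IsTree) {s : Set α} (hs : (G.induce s).Preconnected)
    {r x y : α} (hr : r ∈ s) (hy : y ∈ s) (hx : x ∉ s) (hxy : G.Adj x y) :
    G.dist r y < G.dist r x := by
  obtain ⟨p, hp⟩ := (hs ⟨r, hr⟩ ⟨y, hy⟩).exists_isPath
  let q : G.Walk r y := p.map (Embedding.induce s).toHom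
  have hq : q.IsPath := hp.map Subtype.val_injective
  have hxq : x ∉ q.support := by
    rw [show q.support = p.support.map Subtype.val from Walk.support_map _ _, List.mem_map]
    rintro ⟨z, -, rfl⟩
    exact hx z.2
  have := hG.isAcyclic.length_eq_dist (hq.concat hxq hxy.symm)
  rw [Walk.length_concat, hG.isAcyclic.length_eq_dist hq] at this
  omega

section Graft

/-- `T₁` with the vertex set `N` replaced by a copy of `T₂`: an edge of `T₁` from `x ∉ N` to
`y ∈ N` is redirected to `φ y`. -/
def graft (T₁ : SimpleGraph α) (T₂ : SimpleGraph β) (N : Set α) (φ : α → β) :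
    SimpleGraph ({x // x ∉ N} ⊕ β) where
  Adj
    | .inl x, .inl x' => T₁.Adj x x'
    | .inl x, .inr b | .inr b, .inl x => ∃ y ∈ N, T₁.Adj x y ∧ φ y = b
    | .inr b, .inr b' => T₂.Adj b b'
  symm := ⟨by
    rintro (x | b) (x' | b') h
    exacts [h.symm, h, h, h.symm]⟩
  loopless := ⟨by
    rintro (x | b) h
    exacts [T₁.loopless.irrefl _ h, T₂.loopless.irrefl _ h]⟩

variable {T₁ : SimpleGraph α} {T₂ : SimpleGraph β} {N : Set α} {φ : α → β}

def graftInr : T₂ →g graft T₁ T₂ N φ := ⟨Sum.inr, id⟩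

theorem graft_induce_preconnected {s : Set α} {t : Set β} (S : Set ({x // x ∉ N} ⊕ β))
    (hS₁ : ∀ x, .inl x ∈ S ↔ x.1 ∈ s) (hS₂ : ∀ b, .inr b ∈ S ↔ b ∈ t)
    (hs : (T₁.induce s).Preconnected) (ht : (T₂.induce t).Preconnected)
    (hφ : ∀ y ∈ s, y ∈ N → φ y ∈ t) (hst : t.Nonempty → ∃ y ∈ s, y ∈ N) :
    ((graft T₁ T₂ N φ).induce S).Preconnected := by
  classical
  set H := (graft T₁ T₂ N φ).induce S
  let g : T₂.induce t →g H := induceHom graftInr fun b hb => (hS₂ b).2 hb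
  let f : s → S := fun y =>
    if hy : y.1 ∈ N then ⟨.inr (φ y), (hS₂ _).2 (hφ y y.2 hy)⟩ else ⟨.inl ⟨y, hy⟩, (hS₁ _).2 y.2⟩
  have hf_mem (y : s) (hy : y.1 ∈ N) : f y = g ⟨φ y, hφ y y.2 hy⟩ := dif_pos hy
  have hf_notMem (y : s) (hy : y.1 ∉ N) : f y = ⟨.inl ⟨y, hy⟩, (hS₁ _).2 y.2⟩ := dif_neg hy
  refine hs.of_adj_reachable f (fun y y' hyy' => ?_) ?_
  · by_cases hy : y.1 ∈ N <;> by_cases hy' : y'.1 ∈ N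
    · rw [hf_mem y hy, hf_mem y' hy']
      exact (ht _ _).map g
    · rw [hf_mem y hy, hf_notMem y' hy']
      exact Adj.reachable (G := H) ⟨y, hy, hyy'.symm, rfl⟩
    · rw [hf_notMem y hy, hf_mem y' hy']
      exact Adj.reachable (G := H) ⟨y', hy', hyy', rfl⟩
    · rw [hf_notMem y hy, hf_notMem y' hy']
      exact Adj.reachable (G := H) hyy'
  · rintro ⟨x | b, hz⟩
    · exact ⟨⟨x, (hS₁ x).1 hz⟩, by rw [hf_notMem _ x.2]⟩
    · obtain ⟨y, hys, hyN⟩ := hst ⟨b, (hS₂ b).1 hz⟩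
      refine ⟨⟨y, hys⟩, ?_⟩
      rw [hf_mem _ hyN]
      exact (ht ⟨b, (hS₂ b).1 hz⟩ _).map g

theorem graft_preconnected (hT₁ : T₁.Preconnected) (hT₂ : T₂.Preconnected) {r : α} (hr : r ∈ N) :
    (graft T₁ T₂ N φ).Preconnected :=
  (induceUnivIso _).preconnected_iff.1 <| graft_induce_preconnected (s := .univ) (t := .univ)
    .univ (fun _ => iff_of_true trivial trivial) (fun _ => iff_of_true trivial trivial)
    ((induceUnivIso T₁).preconnected_iff.2 hT₁) ((induceUnivIso T₂).preconnected_iff.2 hT₂)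
    (fun _ _ _ => trivial) fun _ => ⟨r, trivial, hr⟩

theorem exists_dist_lt_of_graft_adj (hT₁ : T₁.IsTree) (hN : (T₁.induce N).Preconnected) {r : α}
    (hr : r ∈ N) {x : {x // x ∉ N}} {b : β} :
    (graft T₁ T₂ N φ).Adj (.inl x) (.inr b) →
      ∃ y ∈ N, T₁.Adj x y ∧ T₁.dist r y < T₁.dist r x ∧ φ y = b := by
  rintro ⟨y, hyN, hxy, rfl⟩
  exact ⟨y, hyN, hxy, hT₁.dist_lt_of_adj_of_notMem hN hr hyN x.2 hxy, rfl⟩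

theorem graft_isAcyclic (hT₁ : T₁.IsTree) (hT₂ : T₂.IsTree) (hN : (T₁.induce N).Preconnected)
    {r : α} (hr : r ∈ N) : (graft T₁ T₂ N φ).IsAcyclic := by
  obtain ⟨r₂⟩ := hT₂.connected.nonempty
  let m : {x // x ∉ N} ⊕ β → ℕ ×ₗ ℕ :=
    Sum.elim (fun x => toLex (1, T₁.dist r x)) (fun b => toLex (0, T₂.dist r₂ b))
  refine isAcyclic_of_unique_lower_adj m ?_ ?_
  · rintro (x | b) (x' | b') h
    · simpa [m] using hT₁.dist_ne_of_adj r h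
    · simp [m]
    · simp [m]
    · simpa [m] using hT₂.dist_ne_of_adj r₂ h
  · rintro (x | b) (x' | b') (x'' | b'') h' h'' hlt' hlt'' <;>
      simp only [m, Sum.elim_inl, Sum.elim_inr, Prod.Lex.toLex_lt_toLex, lt_self_iff_false,
        Order.lt_one_iff, not_lt_zero, zero_ne_one, one_ne_zero, true_and, false_and, false_or,
        or_false, or_self] at hlt' hlt''
    · exact congrArg _ (Subtype.ext (hT₁.eq_of_adj_of_dist_lt r h' h'' hlt' hlt''))
    · obtain ⟨y, hyN, hxy, hy, rfl⟩ := exists_dist_lt_of_graft_adj hT₁ hN hr h''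
      cases x'.2 (hT₁.eq_of_adj_of_dist_lt r h' hxy hlt' hy ▸ hyN)
    · obtain ⟨y, hyN, hxy, hy, rfl⟩ := exists_dist_lt_of_graft_adj hT₁ hN hr h'
      cases x''.2 (hT₁.eq_of_adj_of_dist_lt r h'' hxy hlt'' hy ▸ hyN)
    · obtain ⟨y, -, hxy, hy, rfl⟩ := exists_dist_lt_of_graft_adj hT₁ hN hr h'
      obtain ⟨y', -, hxy', hy', rfl⟩ := exists_dist_lt_of_graft_adj hT₁ hN hr h''
      rw [hT₁.eq_of_adj_of_dist_lt r hxy hxy' hy hy']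
    · exact congrArg _ (hT₂.eq_of_adj_of_dist_lt r₂ h' h'' hlt' hlt'')

theorem graft_isTree (hT₁ : T₁.IsTree) (hT₂ : T₂.IsTree) (hN : (T₁.induce N).Preconnected)
    {r : α} (hr : r ∈ N) : (graft T₁ T₂ N φ).IsTree := by
  obtain ⟨r₂⟩ := hT₂.connected.nonempty
  refine ⟨(connected_iff _).2 ⟨?_, ⟨.inr r₂⟩⟩, graft_isAcyclic hT₁ hT₂ hN hr⟩
  exact graft_preconnected hT₁.connected.preconnected hT₂.connected.preconnected hr

end Graft

section GraftLabel

variable {V : Type*} {N : Set α} {L : Finset V} {lab₁ : α → Finset V} {lab₂ : β → Finset V}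

theorem exists_label_subset_label {E : Finset (Finset V)} (h₁ : ∀ i, ∃ e ∈ E, lab₁ i ⊆ e)
    (h₂ : ∀ e ∈ E, ∃ j, lab₂ j = e) : ∃ φ : α → β, ∀ i, lab₁ i ⊆ lab₂ (φ i) := by
  choose e he hie using h₁
  choose j hj using h₂
  exact ⟨fun i => j (e i) (he i), fun i => (hj _ _).symm ▸ hie i⟩

variable [DecidableEq V]

def graftLabel (N : Set α) (L : Finset V) (lab₁ : α → Finset V) (lab₂ : β → Finset V) :
    {x // x ∉ N} ⊕ β → Finset V :=
  Sum.elim (fun x => lab₁ x) (fun b => lab₂ b ∩ L)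

theorem exists_graftLabel_eq {E : Finset (Finset V)} (h₁ : ∀ e ∈ E, ∃ i, lab₁ i = e)
    (h₂ : ∀ e ∈ E, ∃ j, lab₂ j = e) (hN : ∀ i ∈ N, lab₁ i ⊆ L) {e : Finset V} (he : e ∈ E) :
    ∃ z, graftLabel N L lab₁ lab₂ z = e := by
  by_cases heL : e ⊆ L
  · obtain ⟨j, rfl⟩ := h₂ e he
    exact ⟨.inr j, Finset.inter_eq_left.2 heL⟩
  · obtain ⟨i, rfl⟩ := h₁ e he
    exact ⟨.inl ⟨i, fun hi => heL (hN i hi)⟩, rfl⟩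

theorem exists_graftLabel_subset {E : Finset (Finset V)} (h₁ : ∀ i, ∃ e ∈ E, lab₁ i ⊆ e)
    (h₂ : ∀ j, ∃ e ∈ E, lab₂ j ⊆ e) : ∀ z, ∃ e ∈ E, graftLabel N L lab₁ lab₂ z ⊆ e
  | .inl x => h₁ x
  | .inr b => (h₂ b).imp fun _ ⟨he, hb⟩ => ⟨he, Finset.inter_subset_left.trans hb⟩

theorem exists_graftLabel_inr_iff {t : Set β} {v : V} :
    (∃ z ∈ Sum.inr '' t, v ∈ graftLabel N L lab₁ lab₂ z) ↔ (∃ j ∈ t, v ∈ lab₂ j) ∧ v ∈ L := by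
  simp [graftLabel, ← exists_and_right, and_assoc]

theorem graft_induce_graftLabel_preconnected {T₁ : SimpleGraph α} {T₂ : SimpleGraph β}
    {φ : α → β} (hT₁ : ∀ v, (T₁.induce {i | v ∈ lab₁ i}).Preconnected)
    (hT₂ : ∀ v, (T₂.induce {j | v ∈ lab₂ j}).Preconnected)
    (hL : ∀ v, v ∈ L ↔ ∃ i ∈ N, v ∈ lab₁ i) (hφ : ∀ i ∈ N, lab₁ i ⊆ lab₂ (φ i)) (v : V) :
    ((graft T₁ T₂ N φ).induce {z | v ∈ graftLabel N L lab₁ lab₂ z}).Preconnected := by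
  refine graft_induce_preconnected (s := {i | v ∈ lab₁ i}) (t := {j | v ∈ lab₂ j ∩ L}) _
    (fun _ => Iff.rfl) (fun _ => Iff.rfl) (hT₁ v) ?_ ?_ ?_
  · by_cases hv : v ∈ L
    · rw [show {j | v ∈ lab₂ j ∩ L} = {j | v ∈ lab₂ j} by simp [hv]]
      exact hT₂ v
    · rintro ⟨_, hb⟩
      exact absurd (Finset.mem_inter.1 hb).2 hv
  · exact fun i hi hiN => Finset.mem_inter.2 ⟨hφ i hiN hi, (hL v).2 ⟨i, hiN, hi⟩⟩
  · rintro ⟨b, hb⟩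
    obtain ⟨i, hiN, hi⟩ := (hL v).1 (Finset.mem_inter.1 hb).2
    exact ⟨i, hi, hiN⟩

end GraftLabel

end SimpleGraph

open SimpleGraph

/-- If a CQ is both `L1`-connex and `L2`-connex with
`L2 ⊆ L1`, then there is a join tree `T` of an inclusive extension of its
hypergraph with a subtree `T1` containing exactly the vertices `L1` and a
subtree `T2` of `T1` containing exactly the vertices `L2`. -/
theorem nested_connex_trees {V : Type*}
    (E : Finset (Finset V)) (L1 L2 : Finset V) (h21 : L2 ⊆ L1)
    (h1 : SConnex E L1) (h2 : SConnex E L2) :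
    ∃ (ι : Type) (T : SimpleGraph ι) (lab : ι → Finset V),
      T.IsTree ∧ (∀ e ∈ E, ∃ i, lab i = e) ∧ (∀ i, ∃ e ∈ E, lab i ⊆ e) ∧
      (∀ v : V, (T.induce {i | v ∈ lab i}).Preconnected) ∧
      ∃ S1 S2 : Set ι, S2 ⊆ S1 ∧
        (T.induce S1).Preconnected ∧ (T.induce S2).Preconnected ∧
        (∀ v : V, v ∈ L1 ↔ ∃ i ∈ S1, v ∈ lab i) ∧
        (∀ v : V, v ∈ L2 ↔ ∃ i ∈ S2, v ∈ lab i) := by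
  classical
  obtain ⟨ι1, T1, lab1, hT1, hsurj1, hsub1, hri1, N1, hN1, hcov1⟩ := h1
  obtain ⟨ι2, T2, lab2, hT2, hsurj2, hsub2, hri2, N2, hN2, hcov2⟩ := h2
  rcases N1.eq_empty_or_nonempty with rfl | ⟨r, hr⟩
  · have hL1 : ∀ v, v ∉ L1 := by simpa using hcov1
    exact ⟨ι1, T1, lab1, hT1, hsurj1, hsub1, hri1, ∅, ∅, subset_rfl, hN1, hN1, hcov1,
      fun v => iff_of_false (fun hv => hL1 v (h21 hv)) (by simp)⟩
  have hlab1 : ∀ i ∈ N1, lab1 i ⊆ L1 := fun i hi v hv => (hcov1 v).2 ⟨i, hi, hv⟩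
  obtain ⟨φ, hφ⟩ := exists_label_subset_label hsub1 hsurj2
  refine ⟨_, graft T1 T2 N1 φ, graftLabel N1 L1 lab1 lab2, graft_isTree hT1 hT2 hN1 hr,
    fun e he => exists_graftLabel_eq hsurj1 hsurj2 hlab1 he, exists_graftLabel_subset hsub1 hsub2,
    graft_induce_graftLabel_preconnected hri1 hri2 hcov1 fun i _ => hφ i,
    Sum.inr '' .univ, Sum.inr '' N2, Set.image_mono N2.subset_univ,
    ((induceUnivIso T2).preconnected_iff.2 hT2.connected.preconnected).induce_image graftInr,
    hN2.induce_image graftInr, fun v => ?_, fun v => ?_⟩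
  · rw [exists_graftLabel_inr_iff]
    refine ⟨fun hv => ⟨?_, hv⟩, And.right⟩
    obtain ⟨i, hi, hvi⟩ := (hcov1 v).1 hv
    exact ⟨φ i, trivial, hφ i hvi⟩
  · rw [exists_graftLabel_inr_iff, ← hcov2]
    exact ⟨fun hv => ⟨hv, h21 hv⟩, And.left⟩
end

section
/- Let Q be a CQ and L a partial lexicographic order (a sequence of some free variables). If Q is free-connex, L-connex, and has no disruptive trio with respect to L, then there exists an ordering L+ of all free variables of Q that begins with L such that Q has no disruptive trio with respect to L+. -/
/-
Grow the connected node set `C` of the join tree witnessing `L`-connexity one adjacent node `t`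
at a time, appending the free variables of the label of `t` not listed yet. Every listed
neighbour `x` of a newly appended variable `c` lies in the label of `t`: the nodes containing `x`
form a subtree meeting `C` and the subtree of `c`, which is disjoint from `C`, and in a tree the
only way between them is through `t`. So any two neighbours of `c` listed before it share the
hyperedge containing that label, and no disruptive trio arises.
-/

open SimpleGraph

namespace SimpleGraph

variable {ι : Type*} {T : SimpleGraph ι}

theorem Preconnected.exists_isPath_support_subset {s : Set ι} (hs : (T.induce s).Preconnected)
    {u v : ι} (hu : u ∈ s) (hv : v ∈ s) :
    ∃ p : T.Walk u v, p.IsPath ∧ ∀ z ∈ p.support, z ∈ s := by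
  classical
  obtain ⟨w⟩ := hs ⟨u, hu⟩ ⟨v, hv⟩
  let p : T.Walk u v := w.map (Embedding.induce s).toHom
  have hps : ∀ z ∈ p.support, z ∈ s := by
    intro z hz
    obtain ⟨z', -, rfl⟩ := List.mem_map.mp ((Walk.support_map _ w).subst (motive := (z ∈ ·)) hz)
    exact z'.2
  exact ⟨p.bypass, p.bypass_isPath, fun z hz => hps z (p.support_bypass_subset_support hz)⟩

namespace IsAcyclic

theorem support_subset_of_preconnected (hT : T.IsAcyclic) {s : Set ι}
    (hs : (T.induce s).Preconnected) {u v : ι} {p : T.Walk u v} (hp : p.IsPath)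
    (hu : u ∈ s) (hv : v ∈ s) : ∀ z ∈ p.support, z ∈ s := by
  obtain ⟨q, hq, hqs⟩ := hs.exists_isPath_support_subset hu hv
  obtain rfl : p = q := congrArg Subtype.val ((hT.subsingleton_path u v).elim ⟨p, hp⟩ ⟨q, hq⟩)
  exact hqs

theorem eq_of_adj_of_disjoint (hT : T.IsAcyclic) {C D : Set ι}
    (hC : (T.induce C).Preconnected) (hD : (T.induce D).Preconnected) (hCD : Disjoint C D)
    {t d c c' : ι} (ht : t ∈ D) (hd : d ∈ D) (hc : c ∈ C) (hc' : c' ∈ C)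
    (htc : T.Adj t c) (hdc' : T.Adj d c') : t = d := by
  by_contra hne
  obtain ⟨q, hq, hqC⟩ := hC.exists_isPath_support_subset hc hc'
  have hdq : d ∉ q.support := fun h => hCD.ne_of_mem (hqC d h) hd rfl
  have hp : (Walk.cons htc (q.concat hdc'.symm)).IsPath := by
    refine (hq.concat hdq hdc'.symm).cons ?_
    rw [Walk.support_concat, List.mem_append, List.mem_singleton]
    rintro (h | rfl)
    · exact hCD.ne_of_mem (hqC t h) ht rfl
    · exact hne rfl
  have hcD := hT.support_subset_of_preconnected hD hp ht hd c (by simp)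
  exact hCD.ne_of_mem hc hcD rfl

theorem mem_of_preconnected_of_disjoint (hT : T.IsAcyclic) {A C D : Set ι}
    (hA : (T.induce A).Preconnected) (hC : (T.induce C).Preconnected)
    (hD : (T.induce D).Preconnected) (hCD : Disjoint C D) {t c : ι} (ht : t ∈ D)
    (hc : c ∈ C) (htc : T.Adj t c) {x y : ι} (hxA : x ∈ A) (hxC : x ∈ C) (hyA : y ∈ A)
    (hyD : y ∈ D) : t ∈ A := by
  obtain ⟨p, hp, hpA⟩ := hA.exists_isPath_support_subset hyA hxA
  have hpDC := hT.support_subset_of_preconnected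
    (connected_induce_union hD hC ht hc htc).preconnected hp (Or.inl hyD) (Or.inr hxC)
  obtain ⟨e, he, heD, heD'⟩ := p.exists_boundary_dart D hyD (hCD.notMem_of_mem_left hxC)
  have heC : e.snd ∈ C :=
    (hpDC _ (p.dart_snd_mem_support_of_mem_darts he)).resolve_left heD'
  rw [hT.eq_of_adj_of_disjoint hC hD hCD ht heD hc heC htc e.adj]
  exact hpA _ (p.dart_fst_mem_support_of_mem_darts he)

end IsAcyclic

end SimpleGraph

section Trio

variable {V : Type*} [DecidableEq V]

theorem List.mem_of_idxOf_append_lt {l₁ l₂ : List V} {x c : V} (hc : c ∈ l₁)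
    (h : (l₁ ++ l₂).idxOf x < (l₁ ++ l₂).idxOf c) : x ∈ l₁ := by
  by_contra hx
  rw [List.idxOf_append_of_notMem hx, List.idxOf_append_of_mem hc] at h
  have := List.idxOf_lt_length_iff.mpr hc
  omega

theorem not_dTrio_append {nbr : V → V → Prop} {l₁ l₂ : List V} (h₁ : ¬ DTrio nbr l₁)
    (h₂ : ∀ c ∈ l₂, c ∉ l₁ → ∀ a ∈ l₁ ++ l₂, ∀ b ∈ l₁ ++ l₂, nbr a c → nbr b c → nbr a b) :
    ¬ DTrio nbr (l₁ ++ l₂) := by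
  rintro ⟨a, b, c, ha, hb, hc, hab, hnab, hac, hbc, hiac, hibc⟩
  by_cases hc₁ : c ∈ l₁
  · have ha₁ := List.mem_of_idxOf_append_lt hc₁ hiac
    have hb₁ := List.mem_of_idxOf_append_lt hc₁ hibc
    simp only [List.idxOf_append_of_mem ha₁, List.idxOf_append_of_mem hb₁,
      List.idxOf_append_of_mem hc₁] at hiac hibc
    exact h₁ ⟨a, b, c, ha₁, hb₁, hc₁, hab, hnab, hac, hbc, hiac, hibc⟩
  · exact hnab (h₂ c ((List.mem_append.mp hc).resolve_left hc₁) hc₁ a ha b hb hac hbc)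

end Trio

/-- The data of `SConnex` without the connected subtree. -/
structure JoinTree {V : Type*} (E : Finset (Finset V)) (ι : Type) where
  T : SimpleGraph ι
  lab : ι → Finset V
  isTree : T.IsTree
  exists_lab_eq : ∀ e ∈ E, ∃ i, lab i = e
  exists_subset_lab : ∀ i, ∃ e ∈ E, lab i ⊆ e
  preconnected_induce : ∀ v, (T.induce {i | v ∈ lab i}).Preconnected

namespace JoinTree

variable {V : Type*} [DecidableEq V] {E : Finset (Finset V)} {ι : Type} (J : JoinTree E ι)
  (free : Finset V)

structure TrioFreeListing (C : Set ι) (l : List V) : Prop where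
  preconnected : (J.T.induce C).Preconnected
  nodup : l.Nodup
  mem_iff : ∀ v, v ∈ l ↔ v ∈ free ∧ ∃ i ∈ C, v ∈ J.lab i
  not_dTrio : ¬ DTrio (Nbr E) l

variable {J free} {C : Set ι} {l : List V}

namespace TrioFreeListing

/-- The node set of `x` meets `C` and the node set of `c`, which avoids `C`, so in a tree it
passes through the node `t` joining them. -/
theorem mem_lab_of_nbr (hl : J.TrioFreeListing free C l) {t : ι}
    (hadj : C.Nonempty → ∃ c ∈ C, J.T.Adj t c) {c x : V} (hct : c ∈ J.lab t)
    (hcf : c ∈ free) (hcl : c ∉ l) (hx : x ∈ l) (hxc : Nbr E x c) : x ∈ J.lab t := by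
  obtain ⟨-, i, hiC, hxi⟩ := (hl.mem_iff x).mp hx
  obtain ⟨c₀, hc₀, htc₀⟩ := hadj ⟨i, hiC⟩
  obtain ⟨e, he, hxe, hce⟩ := hxc
  obtain ⟨j, rfl⟩ := J.exists_lab_eq e he
  have hCD : Disjoint C {i | c ∈ J.lab i} :=
    Set.disjoint_left.mpr fun i hiC hci => hcl ((hl.mem_iff c).mpr ⟨hcf, i, hiC, hci⟩)
  exact J.isTree.isAcyclic.mem_of_preconnected_of_disjoint (J.preconnected_induce x)
    hl.preconnected (J.preconnected_induce c) hCD hct hc₀ htc₀ hxi hiC hxe hce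

theorem exists_append_insert (hl : J.TrioFreeListing free C l) {t : ι}
    (hadj : C.Nonempty → ∃ c ∈ C, J.T.Adj t c) :
    ∃ l', J.TrioFreeListing free (insert t C) (l ++ l') := by
  set l' := (J.lab t).toList.filter (fun v => v ∈ free ∧ v ∉ l)
  have hl' : ∀ v, v ∈ l' ↔ v ∈ J.lab t ∧ v ∈ free ∧ v ∉ l := by simp [l']
  refine ⟨l', ⟨?_, ?_, ?_, ?_⟩⟩
  · rcases C.eq_empty_or_nonempty with rfl | hC
    · rw [insert_empty_eq]
      exact Preconnected.of_subsingleton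
    · obtain ⟨c, hc, htc⟩ := hadj hC
      rw [Set.insert_eq]
      exact (connected_induce_union Preconnected.of_subsingleton hl.preconnected
        (Set.mem_singleton t) hc htc).preconnected
  · exact hl.nodup.append ((Finset.nodup_toList _).filter _)
      fun v hv hv' => ((hl' v).mp hv').2.2 hv
  · intro v
    simp only [List.mem_append, hl', hl.mem_iff, Set.mem_insert_iff, exists_eq_or_imp]
    generalize (∃ i ∈ C, v ∈ J.lab i) = P
    tauto
  · refine not_dTrio_append hl.not_dTrio fun c hc hcl a ha b hb hac hbc => ?_
    obtain ⟨hct, hcf, -⟩ := (hl' c).mp hc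
    have hlab : ∀ x ∈ l ++ l', Nbr E x c → x ∈ J.lab t := by
      intro x hx hxc
      rcases List.mem_append.mp hx with hx | hx
      · exact hl.mem_lab_of_nbr hadj hct hcf hcl hx hxc
      · exact ((hl' x).mp hx).1
    obtain ⟨e, he, hte⟩ := J.exists_subset_lab t
    exact ⟨e, he, hte (hlab a ha hac), hte (hlab b hb hbc)⟩

theorem exists_prefix_of_walk (hl : J.TrioFreeListing free C l) {c i : ι} (hc : c ∈ C)
    (w : J.T.Walk c i) : ∃ C' l', J.TrioFreeListing free C' l' ∧ l <+: l' ∧ i ∈ C' := by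
  induction w generalizing C l with
  | nil => exact ⟨C, l, hl, List.prefix_rfl, hc⟩
  | @cons c d i hcd w ih =>
    by_cases hd : d ∈ C
    · exact ih hl hd
    · obtain ⟨l', hl'⟩ := hl.exists_append_insert (t := d) fun _ => ⟨c, hc, hcd.symm⟩
      obtain ⟨C'', l'', hl'', hpre, hi⟩ := ih hl' (Set.mem_insert d C)
      exact ⟨C'', l'', hl'', (l.prefix_append l').trans hpre, hi⟩

theorem exists_prefix_mem (hl : J.TrioFreeListing free C l) (i : ι) :
    ∃ C' l', J.TrioFreeListing free C' l' ∧ l <+: l' ∧ i ∈ C' := by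
  rcases C.eq_empty_or_nonempty with rfl | ⟨c, hc⟩
  · obtain ⟨l', hl'⟩ := hl.exists_append_insert (t := i) fun ⟨_, h⟩ => h.elim
    exact ⟨_, _, hl', l.prefix_append l', Set.mem_insert i ∅⟩
  · obtain ⟨w⟩ := J.isTree.connected.preconnected c i
    exact hl.exists_prefix_of_walk hc w

theorem exists_completion (hl : J.TrioFreeListing free C l)
    (hcov : ∀ v ∈ free, ∃ i, v ∈ J.lab i) :
    ∃ Lp : List V, l <+: Lp ∧ Lp.Nodup ∧ Lp.toFinset = free ∧ ¬ DTrio (Nbr E) Lp := by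
  suffices h : ∀ S ⊆ free, ∃ C' l', J.TrioFreeListing free C' l' ∧ l <+: l' ∧ ∀ v ∈ S, v ∈ l' by
    obtain ⟨C', l', hl', hpre, hcovered⟩ := h free subset_rfl
    refine ⟨l', hpre, hl'.nodup, ?_, hl'.not_dTrio⟩
    ext v
    rw [List.mem_toFinset, hl'.mem_iff]
    exact ⟨And.left, fun hv => (hl'.mem_iff v).mp (hcovered v hv)⟩
  intro S
  induction S using Finset.induction_on with
  | empty => exact fun _ => ⟨C, l, hl, List.prefix_rfl, by simp⟩
  | insert v S _ ih =>
    intro hS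
    obtain ⟨C', l', hl', hpre', hS'⟩ := ih ((Finset.subset_insert v S).trans hS)
    have hvf := hS (Finset.mem_insert_self v S)
    obtain ⟨i, hvi⟩ := hcov v hvf
    obtain ⟨C'', l'', hl'', hpre'', hiC''⟩ := hl'.exists_prefix_mem i
    refine ⟨C'', l'', hl'', hpre'.trans hpre'', ?_⟩
    intro u hu
    rcases Finset.mem_insert.mp hu with rfl | hu
    · exact (hl''.mem_iff u).mpr ⟨hvf, i, hiC'', hvi⟩
    · exact hpre''.subset (hS' u hu)

end TrioFreeListing

end JoinTree

theorem partial_order_completion_general {V : Type*} [DecidableEq V]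
    (E : Finset (Finset V)) (free : Finset V)
    (hfree : ∀ v ∈ free, ∃ e ∈ E, v ∈ e)
    (L : List V) (hnd : L.Nodup) (hLf : ∀ v ∈ L, v ∈ free)
    (hLc : SConnex E L.toFinset)
    (htrio : ¬ DTrio (Nbr E) L) :
    ∃ Lp : List V, L <+: Lp ∧ Lp.Nodup ∧ Lp.toFinset = free ∧
      ¬ DTrio (Nbr E) Lp := by
  obtain ⟨ι, T, lab, hT, hedges, hsub, hvert, Sub, hSub, hSubL⟩ := hLc
  let J : JoinTree E ι := ⟨T, lab, hT, hedges, hsub, hvert⟩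
  have hL : J.TrioFreeListing free Sub L := by
    refine ⟨hSub, hnd, fun v => ?_, htrio⟩
    rw [← hSubL, List.mem_toFinset]
    exact ⟨fun hv => ⟨hLf v hv, hv⟩, And.right⟩
  refine hL.exists_completion fun v hv => ?_
  obtain ⟨e, he, hve⟩ := hfree v hv
  obtain ⟨i, rfl⟩ := hedges e he
  exact ⟨i, hve⟩

/-- Let `Q` be a CQ (hypergraph `E`, free variables `free`)
and `L` a partial lexicographic order (a duplicate-free list of some free
variables).  If `Q` is free-connex, `L`-connex, and has no disruptive trio
w.r.t. `L`, then there is an ordering `L⁺` of all the free variables that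
begins with `L` such that `Q` has no disruptive trio w.r.t. `L⁺`. -/
theorem partial_order_completion {V : Type*} [DecidableEq V]
    (E : Finset (Finset V)) (free : Finset V)
    (hfree : ∀ v ∈ free, ∃ e ∈ E, v ∈ e)
    (L : List V) (hnd : L.Nodup) (hLf : ∀ v ∈ L, v ∈ free)
    (hfc : SConnex E free) (hLc : SConnex E L.toFinset)
    (htrio : ¬ DTrio (Nbr E) L) :
    ∃ Lp : List V, L <+: Lp ∧ Lp.Nodup ∧ Lp.toFinset = free ∧
      ¬ DTrio (Nbr E) Lp :=
  partial_order_completion_general E free hfree L hnd hLf hLc htrio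
end

section
/- Let L+ be the order produced by the FD-reordering procedure applied to a partial lexicographic order L with a set of unary functional dependencies. Then for every variable v in L+, all variables transitively implied by v that appear after v in L+ appear consecutively, immediately following v. -/
/-!
The procedure keeps an invariant on the processed prefix: every processed variable `x` has all
the variables it implies somewhere in the list, and those occurring after `x` form one block
right after `x`. Processing `v` inserts the set `D` of not yet placed variables implied by `v`
directly after `v`, so `D` becomes the block of `v`. For an earlier `x`, either `x` implies `v`,
hence all of `D`, and its block only grows; or `v` lies beyond the block of `x`, and then every
variable implied by `x` already sits before `v`, so none of them is in `D` and the block of `x`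
is untouched.
-/

/-- `Implied fds v y`: variable `v` transitively implies `y` via the unary FDs
`fds` (every variable implies itself). -/
def Implied {V : Type*} (fds : List (V × V)) : V → V → Prop :=
  Relation.ReflTransGen fun x y => (x, y) ∈ fds

open Classical in
/-- One pass of the FD-reordering procedure, with explicit fuel.  At index `i`,
all variables (from the universe `U`) transitively implied by the variable at
position `i` that are not already at positions `≤ i` are placed at consecutive
positions starting at `i + 1`; then the procedure moves on to index `i + 1`. -/
noncomputable def reorderGo {V : Type*} [DecidableEq V]
    (fds : List (V × V)) (U : List V) : ℕ → ℕ → List V → List V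
  | 0, _, M => M
  | fuel + 1, i, M =>
    if h : i < M.length then
      let v := M.get ⟨i, h⟩
      let pre := M.take (i + 1)
      let D := (U.filter fun y => decide (Implied fds v y ∧ y ∉ pre)).dedup
      reorderGo fds U fuel (i + 1)
        (pre ++ D ++ (M.drop (i + 1)).filter fun y => decide (y ∉ D))
    else M

/-- The FD-reordering procedure applied to a (partial lexicographic) order `L`,
with variable universe `U` and unary FDs `fds`. -/
noncomputable def reorder {V : Type*} [DecidableEq V]
    (fds : List (V × V)) (U L : List V) : List V :=
  reorderGo fds U (U.length + L.length) 0 L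

namespace List

variable {α : Type*} [BEq α] [LawfulBEq α] {l l₁ l₂ : List α} {a b : α}

theorem Sublist.idxOf_lt_idxOf (h : l₁ <+ l₂) (hnd : l₂.Nodup) (ha : a ∈ l₁) (hb : b ∈ l₁)
    (hab : l₁.idxOf a < l₁.idxOf b) : l₂.idxOf a < l₂.idxOf b := by
  induction h <;> grind

theorem Sublist.idxOf_lt_idxOf_iff (h : l₁ <+ l₂) (hnd : l₂.Nodup) (ha : a ∈ l₁) (hb : b ∈ l₁) :
    l₁.idxOf a < l₁.idxOf b ↔ l₂.idxOf a < l₂.idxOf b := by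
  refine ⟨h.idxOf_lt_idxOf hnd ha hb, fun h₂ => ?_⟩
  rcases lt_trichotomy (l₁.idxOf a) (l₁.idxOf b) with hlt | heq | hgt
  · exact hlt
  · exact absurd h₂ (by rw [(idxOf_inj ha).1 heq]; exact lt_irrefl _)
  · exact absurd h₂ (h.idxOf_lt_idxOf hnd hb ha hgt).asymm

theorem IsPrefix.idxOf_lt_idxOf (h : l₁ <+: l) (ha : a ∈ l₁) (hb : b ∉ l₁) :
    l.idxOf a < l.idxOf b :=
  ((h.mem_iff_idxOf_lt_length a).1 ha).trans_le
    (not_lt.1 (mt (h.mem_iff_idxOf_lt_length b).2 hb))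

end List

section

open List

variable {V : Type*} {fds : List (V × V)} {U : List V}

theorem Implied.mem_of_mem (hfds : ∀ p ∈ fds, p.1 ∈ U ∧ p.2 ∈ U) {x y : V} (hx : x ∈ U)
    (h : Implied fds x y) : y ∈ U := by
  induction h with
  | refl => exact hx
  | tail _ hstep _ => exact (hfds _ hstep).2

variable [DecidableEq V]

def ConsecutiveImplied (fds : List (V × V)) (M : List V) (x : V) : Prop :=
  ∀ u ∈ M, ∀ w ∈ M, M.idxOf x < M.idxOf u → M.idxOf u < M.idxOf w →
    Implied fds x w → Implied fds x u

theorem consecutiveImplied_middle {A D T : List V} {v : V}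
    (hnd : (A ++ v :: (D ++ T)).Nodup) (hD : ∀ y ∈ D, Implied fds v y)
    (hT : ∀ y ∈ T, ¬ Implied fds v y) : ConsecutiveImplied fds (A ++ v :: (D ++ T)) v := by
  intro u hu w hw hvu huw hvw
  have hpre : A ++ [v] <+: A ++ v :: (D ++ T) := ⟨D ++ T, by simp⟩
  have hpre' : A ++ v :: D <+: A ++ v :: (D ++ T) := ⟨T, by simp⟩
  have huD : u ∈ D ∨ u ∈ T := by
    by_contra! hu'
    grind [hpre.idxOf_lt_idxOf]
  rcases huD with huD | huT
  · exact hD u huD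
  · have hwT : w ∈ T := by
      by_contra hwT
      have hw' : w ∈ A ++ v :: D := by grind
      have hu' : u ∉ A ++ v :: D := by grind
      exact (hpre'.idxOf_lt_idxOf hw' hu').asymm huw
    exact absurd hvw (hT w hwT)

theorem ConsecutiveImplied.insert_implied {A B D T : List V} {v x : V}
    (hnd : (A ++ v :: B).Nodup) (hnd' : (A ++ v :: (D ++ T)).Nodup) (hT : T <+ B)
    (hx : x ∈ A) (hD : ∀ y ∈ D, Implied fds v y)
    (hclosed : ∀ y, Implied fds x y → y ∈ A ++ v :: B)
    (hcons : ConsecutiveImplied fds (A ++ v :: B) x) :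
    ConsecutiveImplied fds (A ++ v :: (D ++ T)) x := by
  have hS : A ++ v :: T <+ A ++ v :: B := (hT.cons_cons v).append_left A
  have hS' : A ++ v :: T <+ A ++ v :: (D ++ T) :=
    ((sublist_append_right D T).cons_cons v).append_left A
  have transfer : ∀ a ∈ A ++ v :: T, ∀ b ∈ A ++ v :: T,
      ((A ++ v :: (D ++ T)).idxOf a < (A ++ v :: (D ++ T)).idxOf b ↔
        (A ++ v :: B).idxOf a < (A ++ v :: B).idxOf b) := fun a ha b hb =>
    (hS'.idxOf_lt_idxOf_iff hnd' ha hb).symm.trans (hS.idxOf_lt_idxOf_iff hnd ha hb)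
  have hpre : A ++ [v] <+: A ++ v :: B := ⟨B, by simp⟩
  have hpre' : A ++ [v] <+: A ++ v :: (D ++ T) := ⟨D ++ T, by simp⟩
  intro u hu w hw hxu huw hxw
  have hwM := hclosed w hxw
  by_cases huD : u ∈ D
  -- `v` lies between `x` and `w` in the old list, so `x` implies `v` and with it all of `D`.
  · have huP : u ∉ A ++ [v] := by grind
    have hwP : w ∉ A ++ [v] := fun hwP => (hpre'.idxOf_lt_idxOf hwP huP).asymm huw
    have hxv : Implied fds x v :=
      hcons v (by simp) w hwM (prefix_append A _ |>.idxOf_lt_idxOf hx (by grind))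
        (hpre.idxOf_lt_idxOf (by simp) hwP) hxw
    exact hxv.trans (hD u huD)
  · have huS : u ∈ A ++ v :: T := by grind
    have huw' : (A ++ v :: B).idxOf u < (A ++ v :: B).idxOf w := by
      by_cases hwD : w ∈ D
      · have huP : u ∈ A ++ [v] := by
          by_contra huP
          have hpreD : A ++ v :: D <+: A ++ v :: (D ++ T) := ⟨T, by simp⟩
          exact (hpreD.idxOf_lt_idxOf (by simp [hwD]) (by grind)).asymm huw
        exact hpre.idxOf_lt_idxOf huP (by grind)
      · exact (transfer u huS w (by grind)).1 huw
    exact hcons u (hS.subset huS) w hwM ((transfer x (by simp [hx]) u huS).1 hxu) huw' hxw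

structure ReorderInv (fds : List (V × V)) (U : List V) (n : ℕ) (M : List V) : Prop where
  nodup : M.Nodup
  subset : M ⊆ U
  closed : ∀ x ∈ M.take n, ∀ y, Implied fds x y → y ∈ M
  consecutive : ∀ x ∈ M.take n, ConsecutiveImplied fds M x

namespace ReorderInv

theorem of_length_le {n : ℕ} {M : List V} (inv : ReorderInv fds U n M) (h : M.length ≤ n)
    (k : ℕ) : ReorderInv fds U k M where
  nodup := inv.nodup
  subset := inv.subset
  closed x hx := inv.closed x (by rw [take_of_length_le h]; exact take_subset k M hx)
  consecutive x hx := inv.consecutive x (by rw [take_of_length_le h]; exact take_subset k M hx)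

theorem step_middle (hfds : ∀ p ∈ fds, p.1 ∈ U ∧ p.2 ∈ U) {A B D T : List V} {v : V}
    (inv : ReorderInv fds U A.length (A ++ v :: B))
    (hD : ∀ y, y ∈ D ↔ y ∈ U ∧ Implied fds v y ∧ y ∉ A ++ [v]) (hDnd : D.Nodup)
    (hT : T <+ B) (hTD : ∀ y, y ∈ T ↔ y ∈ B ∧ y ∉ D) :
    ReorderInv fds U (A.length + 1) (A ++ v :: (D ++ T)) := by
  have hnd : (A ++ v :: (D ++ T)).Nodup := by
    have hB := inv.nodup
    have hTnd := hT.nodup (inv.nodup.sublist (sublist_append_right _ _)).of_cons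
    have hDP : ∀ y ∈ D, y ∉ A ++ [v] := fun y hy => ((hD y).1 hy).2.2
    have hTB : ∀ y ∈ T, y ∈ B ∧ y ∉ D := fun y hy => (hTD y).1 hy
    simp only [nodup_append, nodup_cons, mem_append, mem_cons] at hB hDP ⊢
    clear inv hD hTD hT
    grind
  have hsub : A ++ v :: B ⊆ A ++ v :: (D ++ T) := by grind
  have hvT : ∀ y ∈ T, ¬ Implied fds v y := by grind [inv.nodup, inv.subset]
  have htake : (A ++ v :: (D ++ T)).take (A.length + 1) = A ++ [v] := by simp [take_append]
  have htake₀ : (A ++ v :: B).take A.length = A := by simp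
  refine ⟨hnd, ?_, ?_, ?_⟩
  · grind [inv.subset]
  · rw [htake]
    intro x hx y hxy
    rcases mem_append.1 hx with hxA | hxv
    · exact hsub (inv.closed x (by rwa [htake₀]) y hxy)
    · obtain rfl := mem_singleton.1 hxv
      have := hxy.mem_of_mem hfds (inv.subset (by simp))
      grind
  · rw [htake]
    intro x hx
    rcases mem_append.1 hx with hxA | hxv
    · exact (inv.consecutive x (by rwa [htake₀])).insert_implied inv.nodup hnd hT hxA
        (fun y hy => ((hD y).1 hy).2.1) (inv.closed x (by rwa [htake₀]))
    · obtain rfl := mem_singleton.1 hxv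
      exact consecutiveImplied_middle hnd (fun y hy => ((hD y).1 hy).2.1) hvT

theorem step (hfds : ∀ p ∈ fds, p.1 ∈ U ∧ p.2 ∈ U) {i : ℕ} {M D T : List V}
    (inv : ReorderInv fds U i M) (h : i < M.length)
    (hD : ∀ y, y ∈ D ↔ y ∈ U ∧ Implied fds M[i] y ∧ y ∉ M.take (i + 1)) (hDnd : D.Nodup)
    (hT : T <+ M.drop (i + 1)) (hTD : ∀ y, y ∈ T ↔ y ∈ M.drop (i + 1) ∧ y ∉ D) :
    ReorderInv fds U (i + 1) (M.take (i + 1) ++ D ++ T) := by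
  have hlen : (M.take i).length = i := length_take_of_le h.le
  have hM : M.take i ++ M[i] :: M.drop (i + 1) = M := by
    rw [← drop_eq_getElem_cons h, take_append_drop]
  have inv' : ReorderInv fds U (M.take i).length (M.take i ++ M[i] :: M.drop (i + 1)) := by
    rwa [hM, hlen]
  rw [take_succ_eq_append_getElem h] at hD ⊢
  rw [append_assoc, append_assoc, singleton_append]
  have := inv'.step_middle hfds hD hDnd hT hTD
  rwa [hlen] at this

end ReorderInv

theorem reorderInv_reorderGo (hfds : ∀ p ∈ fds, p.1 ∈ U ∧ p.2 ∈ U) :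
    ∀ (fuel i : ℕ) (M : List V), ReorderInv fds U i M → U.length ≤ i + fuel →
      ReorderInv fds U (reorderGo fds U fuel i M).length (reorderGo fds U fuel i M)
  | 0, i, M, inv, hfuel =>
    inv.of_length_le ((inv.nodup.length_le_of_subset inv.subset).trans hfuel) _
  | fuel + 1, i, M, inv, hfuel => by
    rw [reorderGo]
    split_ifs with h
    · exact reorderInv_reorderGo hfds fuel (i + 1) _
        (inv.step hfds h (by simp) (nodup_dedup _) filter_sublist (by simp)) (by omega)
    · exact inv.of_length_le (not_lt.1 h) _

end

theorem reorder_consecutive_implication_general {V : Type*} [DecidableEq V]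
    (fds : List (V × V)) (U L : List V)
    (hnd : L.Nodup)
    (hLU : ∀ v ∈ L, v ∈ U)
    (hfds : ∀ p ∈ fds, p.1 ∈ U ∧ p.2 ∈ U) :
    ∀ v w u : V,
      v ∈ reorder fds U L → w ∈ reorder fds U L → u ∈ reorder fds U L →
      (reorder fds U L).idxOf v < (reorder fds U L).idxOf u →
      (reorder fds U L).idxOf u < (reorder fds U L).idxOf w →
      Implied fds v w → Implied fds v u := by
  intro v w u hv hw hu hvu huw hvw
  have inv : ReorderInv fds U (reorder fds U L).length (reorder fds U L) :=
    reorderInv_reorderGo hfds _ 0 L ⟨hnd, hLU, by simp, by simp⟩ (by omega)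
  exact inv.consecutive v (by rwa [List.take_length]) u hu w hw hvu huw hvw

/-- Let `L⁺ = reorder fds U L` be the order produced by the
FD-reordering procedure.  Then for every variable `v` in `L⁺`, the variables
transitively implied by `v` that appear after `v` in `L⁺` appear consecutively,
immediately following `v`: whenever `w` is implied by `v` and appears after `v`,
every variable `u` strictly between `v` and `w` is also implied by `v`. -/
theorem reorder_consecutive_implication {V : Type*} [DecidableEq V]
    (fds : List (V × V)) (U L : List V)
    (hnd : L.Nodup) (hUnd : U.Nodup)
    (hLU : ∀ v ∈ L, v ∈ U)
    (hfds : ∀ p ∈ fds, p.1 ∈ U ∧ p.2 ∈ U) :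
    ∀ v w u : V,
      v ∈ reorder fds U L → w ∈ reorder fds U L → u ∈ reorder fds U L →
      (reorder fds U L).idxOf v < (reorder fds U L).idxOf u →
      (reorder fds U L).idxOf u < (reorder fds U L).idxOf w →
      Implied fds v w → Implied fds v u :=
  reorder_consecutive_implication_general fds U L hnd hLU hfds
end

section
/- Let L+ be an FD-reordered order of variables with respect to a set of unary FDs. If a appears before b in L+, then the first variable (earliest in L+) that transitively implies b does not appear strictly before the first variable that transitively implies a. -/
theorem first_implier_monotone_general {V : Type*} [DecidableEq V]
    (fds : List (V × V)) (Lp : List V)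
    (hconsec : ∀ v w u : V, v ∈ Lp → w ∈ Lp → u ∈ Lp →
      Lp.idxOf v < Lp.idxOf u → Lp.idxOf u < Lp.idxOf w →
      Implied fds v w → Implied fds v u)
    (a b fa fb : V) (ha : a ∈ Lp) (hb : b ∈ Lp) (hfb : fb ∈ Lp)
    (hab : Lp.idxOf a < Lp.idxOf b)
    (hfaMin : ∀ g ∈ Lp, Implied fds g a → Lp.idxOf fa ≤ Lp.idxOf g)
    (hfbImp : Implied fds fb b) :
    Lp.idxOf fa ≤ Lp.idxOf fb := by
  by_contra! hfb_lt_fa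
  have hfa_le_a : Lp.idxOf fa ≤ Lp.idxOf a := hfaMin a ha .refl
  have hfb_implies_a : Implied fds fb a :=
    hconsec fb b a hfb hb ha (hfb_lt_fa.trans_le hfa_le_a) hab hfbImp
  exact (hfaMin fb hfb hfb_implies_a).not_gt hfb_lt_fa

/-- Let `Lp` be an FD-reordered order, i.e. it satisfies the
consecutive-implication property: variables transitively implied by `v` that
come after `v` appear consecutively immediately after `v`.  If `a` appears
before `b` in `Lp`, then the first variable of `Lp` transitively implying `b`
(`fb`) does not appear strictly before the first variable transitively implying
`a` (`fa`). -/
theorem first_implier_monotone {V : Type*} [DecidableEq V]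
    (fds : List (V × V)) (Lp : List V) (hnd : Lp.Nodup)
    (hconsec : ∀ v w u : V, v ∈ Lp → w ∈ Lp → u ∈ Lp →
      Lp.idxOf v < Lp.idxOf u → Lp.idxOf u < Lp.idxOf w →
      Implied fds v w → Implied fds v u)
    (a b fa fb : V) (ha : a ∈ Lp) (hb : b ∈ Lp) (hfa : fa ∈ Lp) (hfb : fb ∈ Lp)
    (hab : Lp.idxOf a < Lp.idxOf b)
    (hfaImp : Implied fds fa a)
    (hfaMin : ∀ g ∈ Lp, Implied fds g a → Lp.idxOf fa ≤ Lp.idxOf g)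
    (hfbImp : Implied fds fb b)
    (hfbMin : ∀ g ∈ Lp, Implied fds g b → Lp.idxOf fb ≤ Lp.idxOf g) :
    Lp.idxOf fa ≤ Lp.idxOf fb :=
  first_implier_monotone_general fds Lp hconsec a b fa fb ha hb hfb hab hfaMin hfbImp
end

section
/- Let T be a join tree of a hypergraph, T+ a subtree of T, and V a node not in T+ but adjacent to T+. Suppose vertex p belongs to V but to no node of T+. Then every vertex u that appears both in V's hyperedge together with p in some node outside T+ and in some node of T+ must belong to V. Formally: if u appears in a node of T+ and u,p appear together in a node of T outside T+, then u ∈ V. -/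
namespace SimpleGraph

variable {ι : Type*} {G : SimpleGraph ι} {s : Set ι} {x y : ι}

def induceHomDeleteEdges (hx : x ∉ s) : G.induce s →g G.deleteEdges {s(x, y)} where
  toFun := Subtype.val
  map_rel' {a b} hab := by
    refine (deleteEdges_adj ..).mpr ⟨hab, ?_⟩
    rw [Set.mem_singleton_iff, Sym2.eq_iff]
    rintro (⟨rfl, -⟩ | ⟨-, rfl⟩) <;> simp_all

lemma Preconnected.reachable_deleteEdges_of_induce (h : (G.induce s).Preconnected)
    (hx : x ∉ s) {a b : ι} (ha : a ∈ s) (hb : b ∈ s) :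
    (G.deleteEdges {s(x, y)}).Reachable a b :=
  (h ⟨a, ha⟩ ⟨b, hb⟩).map (induceHomDeleteEdges hx)

end SimpleGraph

open SimpleGraph in
/-- Removing the tree edge `v₀ i₀` (with `i₀ ∈ S`) would not disconnect `v₀` from `i₀`: `v₀`
reaches the common node `j` through nodes containing `p` (so avoiding `i₀`), then `j` reaches
the node of `S` containing `u` through nodes containing `u` (avoiding `v₀` if `u ∉ lab v₀`),
and that node reaches `i₀` inside `S`. -/
theorem handled_node_contains_prior_neighbors {V ι : Type*}
    (G : SimpleGraph ι) (hG : G.IsTree) (lab : ι → Finset V)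
    (hrip : ∀ v : V, (G.induce {i | v ∈ lab i}).Preconnected)
    (S : Set ι) (hconn : (G.induce S).Preconnected)
    (v₀ : ι) (hv₀ : v₀ ∉ S) (hadj : ∃ i ∈ S, G.Adj v₀ i)
    (p : V) (hp : p ∈ lab v₀) (hpS : ∀ i ∈ S, p ∉ lab i)
    (u : V) (huS : ∃ i ∈ S, u ∈ lab i)
    (hup : ∃ j : ι, j ∉ S ∧ u ∈ lab j ∧ p ∈ lab j) :
    u ∈ lab v₀ := by
  by_contra hu
  obtain ⟨i₀, hi₀S, hvi₀⟩ := hadj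
  obtain ⟨i, hiS, hui⟩ := huS
  obtain ⟨j, -, huj, hpj⟩ := hup
  have hbridge : ¬ (G.deleteEdges {s(v₀, i₀)}).Reachable v₀ i₀ :=
    isAcyclic_iff_forall_adj_isBridge.mp hG.isAcyclic hvi₀
  have hv₀j : (G.deleteEdges {s(v₀, i₀)}).Reachable v₀ j := by
    rw [Sym2.eq_swap]
    exact (hrip p).reachable_deleteEdges_of_induce (hpS i₀ hi₀S) hp hpj
  have hji : (G.deleteEdges {s(v₀, i₀)}).Reachable j i :=
    (hrip u).reachable_deleteEdges_of_induce hu huj hui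
  have hii₀ : (G.deleteEdges {s(v₀, i₀)}).Reachable i i₀ :=
    hconn.reachable_deleteEdges_of_induce hv₀ hiS hi₀S
  exact hbridge (hv₀j.trans (hji.trans hii₀))
end

section
/- Let Q be a self-join-free CQ with variables x, y, z such that x–y–z–u is a chordless path in H(Q) (no hyperedge contains both x and z, both x and u, or both y and u). Construct a database I from a triangle instance (R', S', T') by letting the pairs (x,y), (y,z), (z,u) range over the tuples of R', S', T' respectively and setting all other variables to a fixed constant ⊥. Then for every answer q ∈ Q(I) with q(u) = q(x), the triple (q(x), q(y), q(z)) satisfies R'(q(x),q(y)), S'(q(y),q(z)), and T'(q(z),q(x)); conversely every triangle (a,b,c) with R'(a,b), S'(b,c), T'(c,a) yields an answer q with q(x)=a, q(y)=b, q(z)=c, q(u)=a. -/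
/-- Satisfaction of the database constructed for the triangle reduction:
an assignment `q` of values to variables is an answer iff, for every atom `e`
of the query, the restriction of `q` to `e` is a tuple of the relation built
for `e`.  The relation of `e` lets the pairs `(x,y)`, `(y,z)`, `(z,u)` range
over the tuples of `R'`, `S'`, `T'` respectively, lets single occurrences of
`x`, `y`, `z`, `u` range over the corresponding column values, and fixes all
other variables to the constant `⊥` (`bot`). -/
def Sat {Var A : Type*} [DecidableEq A]
    (atoms : Finset (Finset Var)) (x y z u : Var) (bot : A)
    (R' S' T' : Finset (A × A)) (q : Var → A) : Prop :=
  ∀ e ∈ atoms,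
    (∀ v ∈ e, v ≠ x → v ≠ y → v ≠ z → v ≠ u → q v = bot) ∧
    (x ∈ e → y ∈ e → (q x, q y) ∈ R') ∧
    (y ∈ e → z ∈ e → (q y, q z) ∈ S') ∧
    (z ∈ e → u ∈ e → (q z, q u) ∈ T') ∧
    (x ∈ e → q x ∈ R'.image Prod.fst ∪ T'.image Prod.snd) ∧
    (u ∈ e → q u ∈ R'.image Prod.fst ∪ T'.image Prod.snd) ∧
    (y ∈ e → q y ∈ R'.image Prod.snd ∪ S'.image Prod.fst) ∧
    (z ∈ e → q z ∈ S'.image Prod.snd ∪ T'.image Prod.fst)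

/-- Let `Q` be a (self-join-free) CQ whose hypergraph `atoms`
contains a chordless path `x – y – z – u` (consecutive pairs co-occur in an
atom, non-consecutive pairs never co-occur), and let `I` be the database
constructed from a triangle instance `(R', S', T')` as in `Sat`.  Then every
answer `q` with `q u = q x` yields a triangle
`R'(q x, q y), S'(q y, q z), T'(q z, q x)`; conversely every triangle
`(a, b, c)` yields an answer `q` with `q x = a`, `q y = b`, `q z = c`,
`q u = a`. -/
theorem triangle_reduction_correct {Var A : Type*} [DecidableEq A]
    (atoms : Finset (Finset Var)) (x y z u : Var)
    (hxy : x ≠ y) (hxz : x ≠ z) (hxu : x ≠ u)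
    (hyz : y ≠ z) (hyu : y ≠ u) (hzu : z ≠ u)
    (bot : A) (R' S' T' : Finset (A × A))
    (exy : ∃ e ∈ atoms, x ∈ e ∧ y ∈ e)
    (eyz : ∃ e ∈ atoms, y ∈ e ∧ z ∈ e)
    (ezu : ∃ e ∈ atoms, z ∈ e ∧ u ∈ e)
    (cxz : ∀ e ∈ atoms, ¬(x ∈ e ∧ z ∈ e))
    (cxu : ∀ e ∈ atoms, ¬(x ∈ e ∧ u ∈ e))
    (cyu : ∀ e ∈ atoms, ¬(y ∈ e ∧ u ∈ e)) :
    (∀ q : Var → A, Sat atoms x y z u bot R' S' T' q → q u = q x →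
        (q x, q y) ∈ R' ∧ (q y, q z) ∈ S' ∧ (q z, q x) ∈ T') ∧
    (∀ a b c : A, (a, b) ∈ R' → (b, c) ∈ S' → (c, a) ∈ T' →
        ∃ q : Var → A, Sat atoms x y z u bot R' S' T' q ∧
          q x = a ∧ q y = b ∧ q z = c ∧ q u = a) := by
  constructor
  · intro q hq hux
    obtain ⟨e1, he1, hx1, hy1⟩ := exy
    obtain ⟨e2, he2, hy2, hz2⟩ := eyz
    obtain ⟨e3, he3, hz3, hu3⟩ := ezu
    refine ⟨(hq e1 he1).2.1 hx1 hy1, (hq e2 he2).2.2.1 hy2 hz2, ?_⟩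
    have := (hq e3 he3).2.2.2.1 hz3 hu3
    rwa [hux] at this
  · intro a b c hab hbc hca
    haveI := Classical.decEq Var
    refine ⟨fun v => if v = x then a else if v = y then b else if v = z then c
      else if v = u then a else bot, ?_, by simp, by simp [hxy.symm], by simp [hxz.symm, hyz.symm],
      by simp [hxu.symm, hyu.symm, hzu.symm]⟩
    intro e he
    have ha1 : a ∈ R'.image Prod.fst ∪ T'.image Prod.snd := by
      simp only [Finset.mem_union, Finset.mem_image]
      exact Or.inl ⟨(a, b), hab, rfl⟩
    have hb1 : b ∈ R'.image Prod.snd ∪ S'.image Prod.fst := by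
      simp only [Finset.mem_union, Finset.mem_image]
      exact Or.inl ⟨(a, b), hab, rfl⟩
    have hc1 : c ∈ S'.image Prod.snd ∪ T'.image Prod.fst := by
      simp only [Finset.mem_union, Finset.mem_image]
      exact Or.inl ⟨(b, c), hbc, rfl⟩
    refine ⟨?_, ?_, ?_, ?_, ?_, ?_, ?_, ?_⟩
    · intro v _ hvx hvy hvz hvu
      simp [hvx, hvy, hvz, hvu]
    · intro _ _
      simpa [hxy.symm, hxz.symm, hxu.symm] using hab
    · intro hy hz
      simpa [hxy.symm, hyz.symm, hyu.symm, hxz.symm, hzu.symm] using hbc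
    · intro hz hu
      simpa [hxz.symm, hyz.symm, hzu.symm, hxu.symm, hyu.symm] using hca
    · intro _
      simpa using ha1
    · intro _
      simpa [hxu.symm, hyu.symm, hzu.symm] using ha1
    · intro _
      simpa [hxy.symm] using hb1
    · intro _
      simpa [hxz.symm, hyz.symm] using hc1
end
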